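/- arXiv:2003.14000 — 5 statements merged into one kernel-verified Lean document; each statement's English description precedes it below -/
import Mathlib

section
/- Let H > 0, let I = (a,b) be a bounded open interval, and let v : [a,b] → ℝ be continuous with v(x) > -H for all x ∈ I. Then every function θ that is continuously differentiable on the closure of O_I(v) satisfies ∫_I |θ(x, v(x))|² (H + v(x)) dx ≤ ‖θ‖²_{L²(O_I(v))} + 2 M_v ‖θ‖_{L²(O_I(v))} ‖∂_z θ‖_{L²(O_I(v))}. -/
/-!
Fix `x ∈ I`. For every `z ∈ (-H, v x)` the fundamental theorem of calculus along the vertical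
segment gives `θ(x, v x)² ≤ θ(x, z)² + 2 ∫_{-H}^{v x} |θ ∂_z θ| dz`; averaging over `z` yields
`θ(x, v x)² (H + v x) ≤ ∫ θ(x, ·)² + 2 (H + v x) ∫ |θ ∂_z θ|(x, ·)`. Bounding `H + v x` by `M_v`,
integrating over `I` (Fubini on the region below the graph) and applying Cauchy–Schwarz to
`∫ |θ ∂_z θ|` gives the estimate. Square integrability of `θ` and `∂_z θ` comes from `θ` being
`C¹` on the compact set `closure O_I(v)`.
-/

open MeasureTheory Set Filter Topology ENNReal

/-- The region between the bottom plate at height `-H` and the graph of `v` over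
the interval `I = (a,b)`. -/
def OIv (H a b : ℝ) (v : ℝ → ℝ) : Set (ℝ × ℝ) :=
  {p : ℝ × ℝ | p.1 ∈ Set.Ioo a b ∧ -H < p.2 ∧ p.2 < v p.1}

theorem ContDiffOn.exists_bound_fderiv {𝕜 E F : Type*} [NontriviallyNormedField 𝕜]
    [NormedAddCommGroup E] [NormedSpace 𝕜 E] [NormedAddCommGroup F] [NormedSpace 𝕜 F]
    {f : E → F} {s t : Set E} (hf : ContDiffOn 𝕜 1 f s) (hs : IsCompact s) (ht : IsOpen t)
    (hts : t ⊆ s) : ∃ C, ∀ x ∈ t, ‖fderiv 𝕜 f x‖ ≤ C := by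
  suffices ∃ C, ∀ x ∈ s, x ∈ t → ‖fderiv 𝕜 f x‖ ≤ C from
    this.imp fun C hC x hx => hC x (hts hx) hx
  refine hs.induction_on ⟨0, fun _ h => h.elim⟩
    (fun u u' huu' ⟨C, hC⟩ => ⟨C, fun x hx => hC x (huu' hx)⟩)
    (fun u u' ⟨C, hC⟩ ⟨C', hC'⟩ => ⟨max C C', fun x hx hxt => hx.elim
      (fun h => (hC x h hxt).trans (le_max_left _ _))
      (fun h => (hC' x h hxt).trans (le_max_right _ _))⟩) ?_
  intro x hx
  obtain ⟨u, hu, -, f', hf', hf'x⟩ :=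
    (contDiffWithinAt_succ_iff_hasFDerivWithinAt (n := 0) (by simp)).1 (by simpa using hf x hx)
  rw [insert_eq_of_mem hx] at hu
  -- `f'` is a derivative of `f` within `u`, continuous at `x`; on the open set `t` it is `fderiv`.
  have hbound : ∀ᶠ y in 𝓝[s] x, ‖f' y‖ < ‖f' x‖ + 1 :=
    nhdsWithin_le_of_mem hu <|
      hf'x.continuousWithinAt.norm.eventually (eventually_lt_nhds (lt_add_one _))
  have hderiv : ∀ᶠ y in 𝓝[s] x, y ∈ t → fderiv 𝕜 f y = f' y := by
    filter_upwards [eventually_eventually_nhdsWithin.2 hu] with y hy hyt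
    rw [nhdsWithin_eq_nhds.2 (mem_of_superset (ht.mem_nhds hyt) hts)] at hy
    exact ((hf' y (mem_of_mem_nhds hy)).hasFDerivAt hy).fderiv
  obtain ⟨w, hw, hwx⟩ := (hbound.and hderiv).exists_mem
  exact ⟨w, hw, ‖f' x‖ + 1, fun y hy hyt => by
    rw [(hwx y hy).2 hyt]
    exact (hwx y hy).1.le⟩

section compactClosure

variable {E F : Type*} [NormedAddCommGroup E] [MeasurableSpace E] [NormedAddCommGroup F]
  {μ : Measure E} [IsFiniteMeasureOnCompacts μ] {U : Set E} {p : ℝ≥0∞}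

theorem isFiniteMeasure_restrict_of_isCompact_closure (hc : IsCompact (closure U)) :
    IsFiniteMeasure (μ.restrict U) :=
  isFiniteMeasure_restrict.2 ((measure_mono subset_closure).trans_lt hc.measure_lt_top).ne

theorem ContinuousOn.memLp_restrict_of_isCompact_closure [OpensMeasurableSpace E]
    [SecondCountableTopologyEither E F] {f : E → F}
    (hf : ContinuousOn f (closure U)) (hU : MeasurableSet U) (hc : IsCompact (closure U)) :
    MemLp f p (μ.restrict U) := by
  have := isFiniteMeasure_restrict_of_isCompact_closure (μ := μ) hc
  obtain ⟨C, hC⟩ := hc.exists_bound_of_continuousOn hf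
  exact .of_bound ((hf.mono subset_closure).aestronglyMeasurable hU) C
    ((ae_restrict_iff' hU).2 (ae_of_all _ fun x hx => hC x (subset_closure hx)))

theorem ContDiffOn.memLp_fderiv_apply_restrict [NormedSpace ℝ E] [OpensMeasurableSpace E]
    [NormedSpace ℝ F] [CompleteSpace F] [MeasurableSpace F] [BorelSpace F]
    [SecondCountableTopology F] {f : E → F}
    (hf : ContDiffOn ℝ 1 f (closure U)) (hU : IsOpen U) (hc : IsCompact (closure U)) (e : E) :
    MemLp (fun x => fderiv ℝ f x e) p (μ.restrict U) := by
  have := isFiniteMeasure_restrict_of_isCompact_closure (μ := μ) hc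
  obtain ⟨K, hK⟩ := hf.exists_bound_fderiv hc hU subset_closure
  exact .of_bound (measurable_fderiv_apply_const ℝ f e).aestronglyMeasurable (K * ‖e‖)
    ((ae_restrict_iff' hU.measurableSet).2 (ae_of_all _ fun x hx =>
      (ContinuousLinearMap.le_opNorm _ _).trans (by gcongr; exact hK x hx)))

end compactClosure

theorem sq_le_sq_add_integral_abs_mul_deriv {u u' : ℝ → ℝ} {c d z : ℝ} (hz : z ∈ Icc c d)
    (hu : ContinuousOn u (Icc c d)) (hderiv : ∀ w ∈ Ioo c d, HasDerivAt u (u' w) w)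
    (hint : IntegrableOn (fun w => u w * u' w) (Ioo c d)) :
    u d ^ 2 ≤ u z ^ 2 + 2 * ∫ w in Ioo c d, |u w * u' w| := by
  have hsub : Ioo z d ⊆ Ioo c d := Ioo_subset_Ioo_left hz.1
  have hftc : ∫ w in z..d, 2 * (u w * u' w) = u d ^ 2 - u z ^ 2 := by
    refine intervalIntegral.integral_eq_sub_of_hasDerivAt_of_le hz.2
      ((hu.mono (Icc_subset_Icc_left hz.1)).pow 2) (fun w hw => ?_) ?_
    · refine ((hderiv w (hsub hw)).pow 2).congr_deriv ?_
      norm_num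
      ring
    · exact (intervalIntegrable_iff_integrableOn_Ioo_of_le hz.2).2
        ((hint.mono_set hsub).const_mul 2)
  have hmono : ∫ w in Ioo z d, u w * u' w ≤ ∫ w in Ioo c d, |u w * u' w| :=
    calc ∫ w in Ioo z d, u w * u' w
        ≤ ∫ w in Ioo z d, |u w * u' w| :=
          integral_mono (hint.mono_set hsub) (hint.mono_set hsub).abs fun w => le_abs_self _
      _ ≤ ∫ w in Ioo c d, |u w * u' w| :=
          setIntegral_mono_set hint.abs (ae_of_all _ fun w => abs_nonneg _) hsub.eventuallyLE
  rw [intervalIntegral.integral_of_le hz.2, integral_Ioc_eq_integral_Ioo,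
    integral_const_mul] at hftc
  linarith

theorem sq_mul_sub_le_integral_sq_add {u u' : ℝ → ℝ} {c d : ℝ} (hcd : c ≤ d)
    (hu : ContinuousOn u (Icc c d)) (hderiv : ∀ w ∈ Ioo c d, HasDerivAt u (u' w) w)
    (hint : IntegrableOn (fun w => u w * u' w) (Ioo c d)) :
    u d ^ 2 * (d - c) ≤
      (∫ z in Ioo c d, u z ^ 2) + (d - c) * (2 * ∫ z in Ioo c d, |u z * u' z|) := by
  have hsq : IntegrableOn (fun z => u z ^ 2) (Ioo c d) :=
    (hu.pow 2).integrableOn_Icc.mono_set Ioo_subset_Icc_self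
  have hconst := integrableOn_const (μ := volume) (s := Ioo c d)
    (C := 2 * ∫ w in Ioo c d, |u w * u' w|) measure_Ioo_lt_top.ne
  calc u d ^ 2 * (d - c) = ∫ _ in Ioo c d, u d ^ 2 := by
        rw [setIntegral_const, Real.volume_real_Ioo_of_le hcd, smul_eq_mul, mul_comm]
    _ ≤ ∫ z in Ioo c d, (u z ^ 2 + 2 * ∫ w in Ioo c d, |u w * u' w|) :=
        setIntegral_mono_on (integrableOn_const measure_Ioo_lt_top.ne) (hsq.add hconst)
          measurableSet_Ioo fun z hz =>
            sq_le_sq_add_integral_abs_mul_deriv (Ioo_subset_Icc_self hz) hu hderiv hint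
    _ = _ := by
        rw [integral_add hsq hconst, setIntegral_const, Real.volume_real_Ioo_of_le hcd,
          smul_eq_mul]

theorem integral_abs_mul_le_sqrt_mul_sqrt {α : Type*} [MeasurableSpace α] {μ : Measure α}
    {f g : α → ℝ} (hf : MemLp f 2 μ) (hg : MemLp g 2 μ) :
    ∫ a, |f a * g a| ∂μ ≤ √(∫ a, f a ^ 2 ∂μ) * √(∫ a, g a ^ 2 ∂μ) := by
  have := integral_mul_norm_le_Lp_mul_Lq Real.HolderConjugate.two_two
    (by simpa using hf) (by simpa using hg)
  simpa [Real.norm_eq_abs, abs_mul, Real.rpow_two, Real.sqrt_eq_rpow] using this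

section regionBetween

variable {α : Type*} {f g : α → ℝ} {s : Set α}

theorem isOpen_regionBetween [TopologicalSpace α] (hs : IsOpen s) (hf : ContinuousOn f s)
    (hg : ContinuousOn g s) : IsOpen (regionBetween f g s) := by
  rw [isOpen_iff_mem_nhds]
  rintro p ⟨hp, hfp, hgp⟩
  have hf' : ContinuousAt (fun q : α × ℝ => f q.1) p :=
    (hf.continuousAt (hs.mem_nhds hp)).comp continuousAt_fst
  have hg' : ContinuousAt (fun q : α × ℝ => g q.1) p :=
    (hg.continuousAt (hs.mem_nhds hp)).comp continuousAt_fst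
  filter_upwards [continuousAt_fst.preimage_mem_nhds (hs.mem_nhds hp),
    hf'.eventually_lt continuousAt_snd hfp, continuousAt_snd.eventually_lt hg' hgp]
    with q hq hfq hgq using ⟨hq, hfq, hgq⟩

theorem mk_mem_closure_regionBetween [TopologicalSpace α] {x : α} {y : ℝ} (hx : x ∈ s)
    (hfg : f x < g x) (hy : y ∈ Icc (f x) (g x)) : (x, y) ∈ closure (regionBetween f g s) := by
  have hslice : {x} ×ˢ Ioo (f x) (g x) ⊆ regionBetween f g s := by
    rintro ⟨x', y'⟩ ⟨rfl, hy'⟩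
    exact ⟨hx, hy'⟩
  have := closure_mono hslice
  rw [closure_prod_eq, closure_Ioo hfg.ne] at this
  exact this ⟨subset_closure rfl, hy⟩

theorem isCompact_closure_regionBetween {f g : ℝ → ℝ} {a b : ℝ} (hf : ContinuousOn f (Icc a b))
    (hg : ContinuousOn g (Icc a b)) : IsCompact (closure (regionBetween f g (Ioo a b))) := by
  obtain ⟨Cf, hCf⟩ := isCompact_Icc.exists_bound_of_continuousOn hf
  obtain ⟨Cg, hCg⟩ := isCompact_Icc.exists_bound_of_continuousOn hg
  refine ((isCompact_Icc (a := a) (b := b)).prod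
    (isCompact_Icc (a := -Cf) (b := Cg))).closure_of_subset ?_
  rintro ⟨x, y⟩ ⟨hx, hfy, hgy⟩
  have hx' := Ioo_subset_Icc_self hx
  exact ⟨hx', (neg_le_of_abs_le (hCf x hx')).trans hfy.le,
    hgy.le.trans (le_of_abs_le (hCg x hx'))⟩

theorem indicator_regionBetween_apply {M : Type*} [Zero M] (F : α × ℝ → M) (x : α) (y : ℝ) :
    (regionBetween f g s).indicator F (x, y) =
      s.indicator (fun x => (Ioo (f x) (g x)).indicator (fun y => F (x, y)) y) x := by
  classical
  by_cases hx : x ∈ s <;> simp [indicator_apply, regionBetween, hx]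

theorem integral_indicator_regionBetween_mk {E : Type*} [NormedAddCommGroup E] [NormedSpace ℝ E]
    (F : α × ℝ → E) :
    (fun x => ∫ y, (regionBetween f g s).indicator F (x, y)) =
      s.indicator fun x => ∫ y in Ioo (f x) (g x), F (x, y) := by
  ext x
  simp only [indicator_regionBetween_apply]
  by_cases hx : x ∈ s
  · simp only [indicator_of_mem hx, integral_indicator measurableSet_Ioo]
  · simp only [indicator_of_notMem hx, integral_zero]

variable [MeasurableSpace α] {μ : Measure α}

theorem ae_integrableOn_regionBetween_mk [SFinite μ] {E : Type*} [NormedAddCommGroup E]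
    {F : α × ℝ → E} (hF : IntegrableOn F (regionBetween f g s) (μ.prod volume))
    (hR : MeasurableSet (regionBetween f g s)) :
    ∀ᵐ x ∂μ, x ∈ s → IntegrableOn (fun y => F (x, y)) (Ioo (f x) (g x)) := by
  filter_upwards [((integrable_indicator_iff hR).2 hF).prod_right_ae] with x hx hxs
  simp only [indicator_regionBetween_apply, indicator_of_mem hxs] at hx
  exact (integrable_indicator_iff measurableSet_Ioo).1 hx

variable {E : Type*} [NormedAddCommGroup E] [NormedSpace ℝ E] {F : α × ℝ → E}

theorem integrableOn_integral_regionBetween_mk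
    (hF : IntegrableOn F (regionBetween f g s) (μ.prod volume))
    (hR : MeasurableSet (regionBetween f g s)) (hs : MeasurableSet s) :
    IntegrableOn (fun x => ∫ y in Ioo (f x) (g x), F (x, y)) s μ := by
  have := ((integrable_indicator_iff hR).2 hF).integral_prod_left
  rw [integral_indicator_regionBetween_mk] at this
  exact (integrable_indicator_iff hs).1 this

theorem setIntegral_regionBetween [SFinite μ]
    (hF : IntegrableOn F (regionBetween f g s) (μ.prod volume))
    (hR : MeasurableSet (regionBetween f g s)) (hs : MeasurableSet s) :
    ∫ p in regionBetween f g s, F p ∂μ.prod volume =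
      ∫ x in s, (∫ y in Ioo (f x) (g x), F (x, y)) ∂μ := by
  rw [← integral_indicator hR, integral_prod _ ((integrable_indicator_iff hR).2 hF),
    integral_indicator_regionBetween_mk, integral_indicator hs]

end regionBetween

theorem integral_sq_upper_mul_height_le {α : Type*} [MeasurableSpace α] {μ : Measure α}
    [SFinite μ] {F : α × ℝ → ℝ} {g v : α → ℝ} {s : Set α} {M : ℝ} (hs : MeasurableSet s)
    (hR : MeasurableSet (regionBetween g v s)) (hgv : ∀ x ∈ s, g x ≤ v x)
    (hM : ∀ x ∈ s, v x - g x ≤ M) (hM0 : 0 ≤ M)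
    (hcont : ∀ x ∈ s, ContinuousOn (fun y => F (x, y)) (Icc (g x) (v x)))
    (hdiff : ∀ p ∈ regionBetween g v s, DifferentiableAt ℝ (fun y => F (p.1, y)) p.2)
    (hF : MemLp F 2 ((μ.prod volume).restrict (regionBetween g v s)))
    (hFy : MemLp (fun p => deriv (fun y => F (p.1, y)) p.2) 2
      ((μ.prod volume).restrict (regionBetween g v s))) :
    ∫ x in s, F (x, v x) ^ 2 * (v x - g x) ∂μ ≤
      (∫ p in regionBetween g v s, F p ^ 2 ∂μ.prod volume)
        + 2 * M * √(∫ p in regionBetween g v s, F p ^ 2 ∂μ.prod volume)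
          * √(∫ p in regionBetween g v s,
            (deriv (fun y => F (p.1, y)) p.2) ^ 2 ∂μ.prod volume) := by
  set R := regionBetween g v s
  set Fy : α × ℝ → ℝ := fun p => deriv (fun y => F (p.1, y)) p.2
  have hF2 : IntegrableOn (fun p => F p ^ 2) R (μ.prod volume) := hF.integrable_sq
  have hFFy : IntegrableOn (fun p => |F p * Fy p|) R (μ.prod volume) :=
    (hF.integrable_mul hFy).abs
  have hA := integrableOn_integral_regionBetween_mk hF2 hR hs
  have hB := integrableOn_integral_regionBetween_mk hFFy hR hs
  have hslice : ∀ᵐ x ∂μ.restrict s, F (x, v x) ^ 2 * (v x - g x) ≤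
      (∫ y in Ioo (g x) (v x), F (x, y) ^ 2)
        + M * (2 * ∫ y in Ioo (g x) (v x), |F (x, y) * Fy (x, y)|) := by
    filter_upwards [ae_restrict_mem hs, ae_restrict_of_ae
      (ae_integrableOn_regionBetween_mk (hF.integrable_mul hFy) hR)] with x hx hint
    calc F (x, v x) ^ 2 * (v x - g x)
        ≤ (∫ y in Ioo (g x) (v x), F (x, y) ^ 2)
          + (v x - g x) * (2 * ∫ y in Ioo (g x) (v x), |F (x, y) * Fy (x, y)|) :=
          sq_mul_sub_le_integral_sq_add (hgv x hx) (hcont x hx)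
            (fun y hy => (hdiff (x, y) ⟨hx, hy⟩).hasDerivAt) (hint hx)
      _ ≤ _ := by gcongr; exact hM x hx
  calc ∫ x in s, F (x, v x) ^ 2 * (v x - g x) ∂μ
      ≤ ∫ x in s, ((∫ y in Ioo (g x) (v x), F (x, y) ^ 2)
          + M * (2 * ∫ y in Ioo (g x) (v x), |F (x, y) * Fy (x, y)|)) ∂μ :=
        integral_mono_of_nonneg ((ae_restrict_iff' hs).2 (ae_of_all _ fun x hx =>
          mul_nonneg (sq_nonneg _) (sub_nonneg.2 (hgv x hx))))
          (hA.add ((hB.const_mul 2).const_mul M)) hslice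
    _ = (∫ p in R, F p ^ 2 ∂μ.prod volume) + M * (2 * ∫ p in R, |F p * Fy p| ∂μ.prod volume) := by
        rw [integral_add hA ((hB.const_mul 2).const_mul M), integral_const_mul,
          integral_const_mul, setIntegral_regionBetween hF2 hR hs,
          setIntegral_regionBetween hFFy hR hs]
    _ ≤ (∫ p in R, F p ^ 2 ∂μ.prod volume) + M * (2 *
          (√(∫ p in R, F p ^ 2 ∂μ.prod volume) * √(∫ p in R, Fy p ^ 2 ∂μ.prod volume))) := by
        gcongr
        exact integral_abs_mul_le_sqrt_mul_sqrt hF hFy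
    _ = _ := by ring

theorem stmt_1_general (H a b : ℝ) (v : ℝ → ℝ)
    (hv : ContinuousOn v (Icc a b)) (hvH : ∀ x ∈ Ioo a b, -H < v x)
    (θ : ℝ × ℝ → ℝ)
    (hθ : ContDiffOn ℝ 1 θ (closure (OIv H a b v))) :
    ∫ x in Ioo a b, (θ (x, v x)) ^ 2 * (H + v x) ≤
      (∫ p in OIv H a b v, (θ p) ^ 2)
        + 2 * sSup ((fun x => H + v x) '' Ioo a b)
          * Real.sqrt (∫ p in OIv H a b v, (θ p) ^ 2)
          * Real.sqrt (∫ p in OIv H a b v, (deriv (fun z => θ (p.1, z)) p.2) ^ 2) := by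
  have hR : OIv H a b v = regionBetween (fun _ => -H) v (Ioo a b) := rfl
  have hRo : IsOpen (OIv H a b v) :=
    isOpen_regionBetween isOpen_Ioo continuousOn_const (hv.mono Ioo_subset_Icc_self)
  have hRc : IsCompact (closure (OIv H a b v)) :=
    isCompact_closure_regionBetween continuousOn_const hv
  have hderiv (p) (hp : p ∈ OIv H a b v) :
      HasDerivAt (fun z => θ (p.1, z)) (fderiv ℝ θ p (0, 1)) p.2 :=
    ((hθ.contDiffAt (mem_of_superset (hRo.mem_nhds hp) subset_closure)).differentiableAt
      one_ne_zero).hasFDerivAt.comp_hasDerivAt p.2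
        ((hasDerivAt_const _ p.1).prodMk (hasDerivAt_id _))
  have hθ2 : MemLp θ 2 (volume.restrict (OIv H a b v)) :=
    hθ.continuousOn.memLp_restrict_of_isCompact_closure hRo.measurableSet hRc
  have hθz : MemLp (fun p => deriv (fun z => θ (p.1, z)) p.2) 2 (volume.restrict (OIv H a b v)) :=
    (hθ.memLp_fderiv_apply_restrict hRo hRc (0, 1)).ae_eq <| (ae_restrict_iff' hRo.measurableSet).2
      (ae_of_all _ fun p hp => (hderiv p hp).deriv.symm)
  have hbdd : BddAbove ((fun x => H + v x) '' Ioo a b) :=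
    (isCompact_Icc.bddAbove_image (continuousOn_const.add hv)).mono (image_mono Ioo_subset_Icc_self)
  have key := integral_sq_upper_mul_height_le (μ := volume) (F := θ) measurableSet_Ioo
    (hR ▸ hRo.measurableSet) (fun x hx => (hvH x hx).le)
    (fun x hx => by simpa [add_comm] using le_csSup hbdd (mem_image_of_mem _ hx))
    (Real.sSup_nonneg (by rintro _ ⟨x, hx, rfl⟩; linarith [hvH x hx]))
    (fun x hx => hθ.continuousOn.comp (by fun_prop)
      fun y hy => mk_mem_closure_regionBetween (f := fun _ => -H) hx (hvH x hx) hy)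
    (fun p hp => (hderiv p hp).differentiableAt)
    (by rwa [← Measure.volume_eq_prod]) (by rwa [← Measure.volume_eq_prod])
  rw [← Measure.volume_eq_prod, ← hR] at key
  simpa only [sub_neg_eq_add, add_comm _ H] using key

/-- Trace estimate on the graph of `v` for functions that are `C¹` on the closure of
`O_I(v)`:
`∫_I |θ(x,v(x))|² (H+v(x)) dx ≤ ‖θ‖² + 2 M_v ‖θ‖ ‖∂_z θ‖`, with `M_v = sup_I (H+v)`. -/
theorem stmt_1 (H a b : ℝ) (hH : 0 < H) (hab : a < b) (v : ℝ → ℝ)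
    (hv : ContinuousOn v (Icc a b)) (hvH : ∀ x ∈ Ioo a b, -H < v x)
    (θ : ℝ × ℝ → ℝ)
    (hθ : ContDiffOn ℝ 1 θ (closure (OIv H a b v))) :
    ∫ x in Ioo a b, (θ (x, v x)) ^ 2 * (H + v x) ≤
      (∫ p in OIv H a b v, (θ p) ^ 2)
        + 2 * sSup ((fun x => H + v x) '' Ioo a b)
          * Real.sqrt (∫ p in OIv H a b v, (θ p) ^ 2)
          * Real.sqrt (∫ p in OIv H a b v, (deriv (fun z => θ (p.1, z)) p.2) ^ 2) :=
  stmt_1_general H a b v hv hvH θ hθ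
end

section
/- Let H > 0, let I = (a,b) be a bounded open interval, and let v : [a,b] → ℝ be continuous with v(x) > -H for all x ∈ I. Then every function θ that is continuously differentiable on the closure of O_I(v) and satisfies θ(x, v(x)) = 0 for all x ∈ I obeys the Poincaré inequality ‖θ‖_{L²(O_I(v))} ≤ 2 M_v ‖∂_z θ‖_{L²(O_I(v))}. -/
/-!
On each vertical fibre `{x} × (-H, v x)` the function `θ (x, ·)` vanishes at the top, so the
fundamental theorem of calculus and Cauchy–Schwarz give
`θ (x, z) ^ 2 ≤ (v x + H) * ∫ (∂_z θ) ^ 2` along the fibre. Integrating over the fibre yields a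
one-dimensional Poincaré inequality with constant `(v x + H) ^ 2 ≤ M_v ^ 2`, and Fubini integrates
it over `x`. Since `θ` is `C¹` up to the compact closure of `O_I(v)`, `∂_z θ` is bounded there,
which makes all the integrals finite.
-/

open MeasureTheory Set Topology Filter
open scoped ENNReal

theorem sq_setIntegral_le_measureReal_mul_setIntegral_sq {α : Type*} [MeasurableSpace α]
    {μ : Measure α} {s : Set α} {f : α → ℝ}
    (hs : μ s ≠ ∞) (hf : IntegrableOn f s μ) (hf2 : IntegrableOn (fun x => f x ^ 2) s μ) :
    (∫ x in s, f x ∂μ) ^ 2 ≤ μ.real s * ∫ x in s, f x ^ 2 ∂μ := by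
  rcases eq_or_ne (μ s) 0 with h0 | h0
  · simp [Measure.restrict_eq_zero.mpr h0]
  have hm : 0 < μ.real s := ENNReal.toReal_pos h0 hs
  have jensen := (even_two.convexOn_pow (𝕜 := ℝ)).map_set_average_le
    (continuous_pow 2).continuousOn isClosed_univ h0 hs (by simp) hf hf2
  rw [setAverage_eq, setAverage_eq, smul_eq_mul, smul_eq_mul, mul_pow] at jensen
  have := mul_le_mul_of_nonneg_left jensen (sq_nonneg (μ.real s))
  field_simp at this
  nlinarith

theorem ContinuousOn.integrableOn_sq_of_norm_le {α : Type*} [TopologicalSpace α]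
    [MeasurableSpace α] [OpensMeasurableSpace α] {μ : Measure α} {s : Set α} {f : α → ℝ} {C : ℝ}
    (hf : ContinuousOn f s) (hs : MeasurableSet s) (hμ : μ s < ∞) (hC : ∀ x ∈ s, ‖f x‖ ≤ C) :
    IntegrableOn (fun x => f x ^ 2) s μ :=
  .of_bound hμ ((hf.pow 2).aestronglyMeasurable hs) (C ^ 2) <|
    ae_restrict_of_forall_mem hs fun x hx => by
      rw [norm_pow]
      exact pow_le_pow_left₀ (norm_nonneg _) (hC x hx) 2

theorem sq_le_mul_setIntegral_deriv_sq {f f' : ℝ → ℝ} {c d z : ℝ} (hz : z ∈ Icc c d)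
    (hf : ContinuousOn f (Icc c d)) (hderiv : ∀ x ∈ Ioo c d, HasDerivAt f (f' x) x)
    (hf' : ContinuousOn f' (Ioo c d)) (hf'2 : IntegrableOn (fun x => f' x ^ 2) (Ioo c d))
    (hd : f d = 0) :
    f z ^ 2 ≤ (d - c) * ∫ x in Ioo c d, f' x ^ 2 := by
  have hsub : Ioo z d ⊆ Ioo c d := Ioo_subset_Ioo_left hz.1
  have hf'int : IntegrableOn f' (Ioo c d) := by
    have := (memLp_two_iff_integrable_sq (hf'.aestronglyMeasurable measurableSet_Ioo)).mpr hf'2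
    exact this.integrable one_le_two
  have hftc : ∫ x in Ioo z d, f' x = - f z := by
    rw [← integral_Ioc_eq_integral_Ioo, ← intervalIntegral.integral_of_le hz.2,
      intervalIntegral.integral_eq_sub_of_hasDerivAt_of_le hz.2
        (hf.mono (Icc_subset_Icc_left hz.1)) (fun x hx => hderiv x (hsub hx))
        ((intervalIntegrable_iff_integrableOn_Ioo_of_le hz.2).mpr (hf'int.mono_set hsub)), hd,
      zero_sub]
  calc f z ^ 2 = (∫ x in Ioo z d, f' x) ^ 2 := by rw [hftc, neg_sq]
    _ ≤ volume.real (Ioo z d) * ∫ x in Ioo z d, f' x ^ 2 :=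
      sq_setIntegral_le_measureReal_mul_setIntegral_sq (measure_Ioo_lt_top (a := z)).ne
        (hf'int.mono_set hsub) (hf'2.mono_set hsub)
    _ ≤ (d - c) * ∫ x in Ioo c d, f' x ^ 2 := by
      rw [Real.volume_real_Ioo_of_le hz.2]
      exact mul_le_mul (by linarith [hz.1])
        (setIntegral_mono_set hf'2 (ae_of_all _ fun _ => sq_nonneg _) hsub.eventuallyLE)
        (setIntegral_nonneg measurableSet_Ioo fun _ _ => sq_nonneg _) (by linarith [hz.1, hz.2])

theorem setIntegral_sq_le_of_hasDerivAt_of_right_eq_zero {f f' : ℝ → ℝ} {c d : ℝ} (hcd : c ≤ d)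
    (hf : ContinuousOn f (Icc c d)) (hderiv : ∀ x ∈ Ioo c d, HasDerivAt f (f' x) x)
    (hf' : ContinuousOn f' (Ioo c d)) (hf'2 : IntegrableOn (fun x => f' x ^ 2) (Ioo c d))
    (hd : f d = 0) :
    ∫ x in Ioo c d, f x ^ 2 ≤ (d - c) ^ 2 * ∫ x in Ioo c d, f' x ^ 2 := by
  have hf2 : IntegrableOn (fun x => f x ^ 2) (Ioo c d) :=
    ((hf.pow 2).integrableOn_compact isCompact_Icc).mono_set Ioo_subset_Icc_self
  calc ∫ x in Ioo c d, f x ^ 2 ≤ ∫ _ in Ioo c d, (d - c) * ∫ x in Ioo c d, f' x ^ 2 :=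
        setIntegral_mono_on hf2 (integrableOn_const measure_Ioo_lt_top.ne) measurableSet_Ioo
          fun z hz => sq_le_mul_setIntegral_deriv_sq (Ioo_subset_Icc_self hz) hf hderiv hf' hf'2 hd
    _ = (d - c) ^ 2 * ∫ x in Ioo c d, f' x ^ 2 := by
      rw [setIntegral_const, Real.volume_real_Ioo_of_le hcd, smul_eq_mul]; ring

section BoundedDerivative

variable {𝕜 E F : Type*} [NontriviallyNormedField 𝕜] [NormedAddCommGroup E] [NormedSpace 𝕜 E]
  [NormedAddCommGroup F] [NormedSpace 𝕜 F] {f : E → F} {s t : Set E}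

/-- `f` need not have unique derivatives within `t`, so the bound comes from a local
within-derivative `f'`, which agrees with `fderiv 𝕜 f` on the open set `s`. -/
theorem ContDiffWithinAt.exists_mem_nhdsWithin_isBounded_image_fderiv {p : E}
    (hf : ContDiffWithinAt 𝕜 1 f t p) (hs : IsOpen s) (hst : s ⊆ t) :
    ∃ u ∈ 𝓝[t] p, Bornology.IsBounded (fderiv 𝕜 f '' (u ∩ s)) := by
  obtain ⟨u, hu, -, -, f', hf'u, hf'c⟩ :=
    (contDiffWithinAt_succ_iff_hasFDerivWithinAt' (n := 0) (by simp)).mp (by simpa using hf)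
  have hbdd : ∀ᶠ q in 𝓝[t] p, ‖f' q‖ < ‖f' p‖ + 1 :=
    hf'c.continuousWithinAt.norm.eventually_lt_const (lt_add_one _)
  refine ⟨{q | ‖f' q‖ < ‖f' p‖ + 1} ∩ u,
    inter_mem hbdd (nhdsWithin_mono _ (subset_insert _ _) hu), ?_⟩
  refine (Metric.isBounded_closedBall (x := 0) (r := ‖f' p‖ + 1)).subset ?_
  rintro _ ⟨q, ⟨⟨hq, hqu⟩, hqs⟩, rfl⟩
  rw [mem_closedBall_zero_iff,
    ((hf'u q hqu).hasFDerivAt (mem_of_superset (hs.mem_nhds hqs) hst)).fderiv]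
  exact hq.le

theorem ContDiffOn.isBounded_image_fderiv (hf : ContDiffOn 𝕜 1 f t) (ht : IsCompact t)
    (hs : IsOpen s) (hst : s ⊆ t) : Bornology.IsBounded (fderiv 𝕜 f '' s) := by
  have key : Bornology.IsBounded (fderiv 𝕜 f '' (t ∩ s)) := by
    refine ht.induction_on (p := fun u => Bornology.IsBounded (fderiv 𝕜 f '' (u ∩ s)))
      (by simp) (fun u₁ u₂ h hb => hb.subset (image_mono (inter_subset_inter_left _ h)))
      (fun u₁ u₂ h₁ h₂ => ?_)
      (fun p hp => (hf p hp).exists_mem_nhdsWithin_isBounded_image_fderiv hs hst)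
    simpa only [union_inter_distrib_right, image_union, Bornology.isBounded_union] using ⟨h₁, h₂⟩
  rwa [inter_eq_right.mpr hst] at key

end BoundedDerivative

section PartialDerivative

variable {𝕜 E F : Type*} [NontriviallyNormedField 𝕜] [NormedAddCommGroup E] [NormedSpace 𝕜 E]
  [NormedAddCommGroup F] [NormedSpace 𝕜 F] {θ : E × 𝕜 → F} {S t : Set (E × 𝕜)}

theorem HasFDerivAt.hasDerivAt_comp_prodMk_right {θ' : E × 𝕜 →L[𝕜] F} {p : E × 𝕜}
    (hθ : HasFDerivAt θ θ' p) : HasDerivAt (fun z => θ (p.1, z)) (θ' (0, 1)) p.2 := by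
  simpa [Function.comp_def] using
    (hθ.comp p.2 (hasFDerivAt_prodMk_right (𝕜 := 𝕜) p.1 p.2)).hasDerivAt

theorem ContDiffOn.hasDerivAt_slice (hθ : ContDiffOn 𝕜 1 θ S) (hS : IsOpen S) {p : E × 𝕜}
    (hp : p ∈ S) : HasDerivAt (fun z => θ (p.1, z)) (fderiv 𝕜 θ p (0, 1)) p.2 :=
  ((hθ.differentiableOn one_ne_zero p hp).differentiableAt
    (hS.mem_nhds hp)).hasFDerivAt.hasDerivAt_comp_prodMk_right

theorem ContDiffOn.continuousOn_deriv_slice (hθ : ContDiffOn 𝕜 1 θ S) (hS : IsOpen S) :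
    ContinuousOn (fun p => deriv (fun z => θ (p.1, z)) p.2) S :=
  ((hθ.continuousOn_fderiv_of_isOpen hS le_rfl).clm_apply continuousOn_const).congr
    fun _ hp => (hθ.hasDerivAt_slice hS hp).deriv

theorem ContDiffOn.exists_norm_deriv_slice_le (hθ : ContDiffOn 𝕜 1 θ t) (ht : IsCompact t)
    (hS : IsOpen S) (hSt : S ⊆ t) : ∃ K, ∀ p ∈ S, ‖deriv (fun z => θ (p.1, z)) p.2‖ ≤ K := by
  obtain ⟨K, hK⟩ := (hθ.isBounded_image_fderiv ht hS hSt).exists_norm_le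
  refine ⟨K, fun p hp => ?_⟩
  rw [((hθ.mono hSt).hasDerivAt_slice hS hp).deriv]
  simpa using (fderiv 𝕜 θ p).le_of_opNorm_le (hK _ (mem_image_of_mem _ hp)) ((0 : E), (1 : 𝕜))

end PartialDerivative

theorem setIntegral_le_setIntegral_of_ae_slice_le {α β : Type*} [MeasurableSpace α]
    [MeasurableSpace β] {μ : Measure α} {ν : Measure β} [SFinite μ] [SFinite ν]
    {S : Set (α × β)} (hS : MeasurableSet S) {f g : α × β → ℝ}
    (hf : IntegrableOn f S (μ.prod ν)) (hg : IntegrableOn g S (μ.prod ν))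
    (hfg : ∀ᵐ x ∂μ, ∫ y in Prod.mk x ⁻¹' S, f (x, y) ∂ν ≤ ∫ y in Prod.mk x ⁻¹' S, g (x, y) ∂ν) :
    ∫ p in S, f p ∂μ.prod ν ≤ ∫ p in S, g p ∂μ.prod ν := by
  have fubini : ∀ h : α × β → ℝ, IntegrableOn h S (μ.prod ν) →
      ∫ p in S, h p ∂μ.prod ν = ∫ x, ∫ y in Prod.mk x ⁻¹' S, h (x, y) ∂ν ∂μ ∧
      Integrable (fun x => ∫ y in Prod.mk x ⁻¹' S, h (x, y) ∂ν) μ := by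
    intro h hh
    have hind := hh.integrable_indicator hS
    have slice : ∀ x, ∫ y, S.indicator h (x, y) ∂ν = ∫ y in Prod.mk x ⁻¹' S, h (x, y) ∂ν :=
      fun x => by rw [← integral_indicator (hS.preimage measurable_prodMk_left)]; rfl
    refine ⟨?_, ?_⟩
    · rw [← integral_indicator hS, integral_prod _ hind]
      simp only [slice]
    · simpa only [slice] using hind.integral_prod_left
  obtain ⟨hf_eq, hf_int⟩ := fubini f hf
  obtain ⟨hg_eq, hg_int⟩ := fubini g hg
  rw [hf_eq, hg_eq]
  exact integral_mono_ae hf_int hg_int hfg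

theorem ContinuousOn.le_sSup_image_Ioo {f : ℝ → ℝ} {a b x : ℝ} (hf : ContinuousOn f (Icc a b))
    (hx : x ∈ Ioo a b) : f x ≤ sSup (f '' Ioo a b) :=
  le_csSup ((isCompact_Icc.bddAbove_image hf).mono (image_mono Ioo_subset_Icc_self))
    (mem_image_of_mem f hx)

section Region

variable {H a b : ℝ} {v : ℝ → ℝ}

theorem isOpen_OIv (hv : ContinuousOn v (Ioo a b)) : IsOpen (OIv H a b v) := by
  have hcont : ContinuousOn (fun p : ℝ × ℝ => (p.2, v p.1 - p.2)) (Ioo a b ×ˢ univ) :=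
    continuousOn_snd.prodMk ((hv.comp continuousOn_fst fun p hp => hp.1).sub continuousOn_snd)
  convert hcont.isOpen_inter_preimage (isOpen_Ioo.prod isOpen_univ)
    (isOpen_Ioi.prod isOpen_Ioi) (t := Ioi (-H) ×ˢ Ioi 0) using 1
  ext p
  simp [OIv]

theorem isCompact_closure_OIv (hv : ContinuousOn v (Icc a b)) :
    IsCompact (closure (OIv H a b v)) := by
  obtain ⟨C, hC⟩ := isCompact_Icc.bddAbove_image hv
  refine ((isCompact_Icc (a := a) (b := b)).prod
    (isCompact_Icc (a := -H) (b := C))).closure_of_subset ?_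
  rintro ⟨x, z⟩ ⟨hx, hz₁, hz₂⟩
  exact ⟨Ioo_subset_Icc_self hx, hz₁.le,
    hz₂.le.trans (hC (mem_image_of_mem v (Ioo_subset_Icc_self hx)))⟩

theorem preimage_prodMk_OIv_of_mem {x : ℝ} (hx : x ∈ Ioo a b) :
    Prod.mk x ⁻¹' OIv H a b v = Ioo (-H) (v x) := by
  ext z
  simp [OIv, hx.1, hx.2]

theorem preimage_prodMk_OIv_of_notMem {x : ℝ} (hx : x ∉ Ioo a b) :
    Prod.mk x ⁻¹' OIv H a b v = ∅ := by
  ext z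
  simp only [OIv, mem_preimage, mem_ofPred_eq, mem_empty_iff_false, iff_false]
  exact fun h => hx h.1

theorem prodMk_mem_closure_OIv {x z : ℝ} (hx : x ∈ Ioo a b) (hvx : -H < v x)
    (hz : z ∈ Icc (-H) (v x)) : (x, z) ∈ closure (OIv H a b v) := by
  have hsub : {x} ×ˢ Ioo (-H) (v x) ⊆ OIv H a b v := by
    rintro ⟨x', z'⟩ ⟨rfl, hz'⟩
    exact ⟨hx, hz'⟩
  have := closure_mono hsub
  rw [closure_prod_eq, closure_singleton, closure_Ioo hvx.ne] at this
  exact this ⟨rfl, hz⟩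

variable {θ : ℝ × ℝ → ℝ} {K : ℝ}

theorem setIntegral_sq_slice_OIv_le {x : ℝ} (hv : ContinuousOn v (Icc a b)) (hx : x ∈ Ioo a b)
    (hvx : -H < v x) (hθ : ContDiffOn ℝ 1 θ (closure (OIv H a b v)))
    (hK : ∀ p ∈ OIv H a b v, ‖deriv (fun z => θ (p.1, z)) p.2‖ ≤ K) (hθ0 : θ (x, v x) = 0) :
    ∫ z in Ioo (-H) (v x), θ (x, z) ^ 2 ≤
      (v x + H) ^ 2 * ∫ z in Ioo (-H) (v x), deriv (fun z => θ (x, z)) z ^ 2 := by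
  have hS : IsOpen (OIv H a b v) := isOpen_OIv (hv.mono Ioo_subset_Icc_self)
  have hθS := hθ.mono subset_closure
  have hslice : MapsTo (Prod.mk x) (Ioo (-H) (v x)) (OIv H a b v) := fun _ hz => ⟨hx, hz⟩
  have hderiv_cont : ContinuousOn (fun z => deriv (fun z => θ (x, z)) z) (Ioo (-H) (v x)) :=
    (hθS.continuousOn_deriv_slice hS).comp (Continuous.prodMk_right x).continuousOn hslice
  have hderiv_sq : IntegrableOn (fun z => deriv (fun z => θ (x, z)) z ^ 2) (Ioo (-H) (v x)) :=
    hderiv_cont.integrableOn_sq_of_norm_le measurableSet_Ioo measure_Ioo_lt_top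
      fun z hz => hK _ (hslice hz)
  have h := setIntegral_sq_le_of_hasDerivAt_of_right_eq_zero hvx.le
    (hθ.continuousOn.comp (Continuous.prodMk_right x).continuousOn
      fun z hz => prodMk_mem_closure_OIv hx hvx hz)
    (fun z hz => (hθS.hasDerivAt_slice hS (hslice hz)).differentiableAt.hasDerivAt)
    hderiv_cont hderiv_sq hθ0
  rwa [sub_neg_eq_add] at h

theorem setIntegral_sq_OIv_le {M : ℝ} (hv : ContinuousOn v (Icc a b))
    (hvH : ∀ x ∈ Ioo a b, -H < v x) (hM : ∀ x ∈ Ioo a b, H + v x ≤ M)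
    (hθ : ContDiffOn ℝ 1 θ (closure (OIv H a b v))) (hθ0 : ∀ x ∈ Ioo a b, θ (x, v x) = 0) :
    ∫ p in OIv H a b v, θ p ^ 2 ≤
      M ^ 2 * ∫ p in OIv H a b v, deriv (fun z => θ (p.1, z)) p.2 ^ 2 := by
  have hS : IsOpen (OIv H a b v) := isOpen_OIv (hv.mono Ioo_subset_Icc_self)
  have hcl : IsCompact (closure (OIv H a b v)) := isCompact_closure_OIv hv
  obtain ⟨K, hK⟩ := hθ.exists_norm_deriv_slice_le hcl hS subset_closure
  have hθ_sq : IntegrableOn (fun p => θ p ^ 2) (OIv H a b v) :=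
    ((hθ.continuousOn.pow 2).integrableOn_compact hcl).mono_set subset_closure
  have hderiv_sq : IntegrableOn (fun p => deriv (fun z => θ (p.1, z)) p.2 ^ 2) (OIv H a b v) :=
    ((hθ.mono subset_closure).continuousOn_deriv_slice hS).integrableOn_sq_of_norm_le
      hS.measurableSet ((measure_mono subset_closure).trans_lt hcl.measure_lt_top) hK
  rw [← integral_const_mul, Measure.volume_eq_prod]
  refine setIntegral_le_setIntegral_of_ae_slice_le hS.measurableSet hθ_sq
    (hderiv_sq.const_mul _) (ae_of_all _ fun x => ?_)
  by_cases hx : x ∈ Ioo a b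
  · rw [preimage_prodMk_OIv_of_mem hx, integral_const_mul]
    have hvx := hvH x hx
    refine (setIntegral_sq_slice_OIv_le hv hx hvx hθ hK (hθ0 x hx)).trans ?_
    exact mul_le_mul_of_nonneg_right (pow_le_pow_left₀ (by linarith) (by linarith [hM x hx]) 2)
      (setIntegral_nonneg measurableSet_Ioo fun _ _ => sq_nonneg _)
  · rw [preimage_prodMk_OIv_of_notMem hx]
    simp

end Region

theorem stmt_3_general (H a b : ℝ) (hab : a < b) (v : ℝ → ℝ)
    (hv : ContinuousOn v (Icc a b)) (hvH : ∀ x ∈ Ioo a b, -H < v x)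
    (θ : ℝ × ℝ → ℝ)
    (hθ : ContDiffOn ℝ 1 θ (closure (OIv H a b v)))
    (hθ0 : ∀ x ∈ Ioo a b, θ (x, v x) = 0) :
    Real.sqrt (∫ p in OIv H a b v, (θ p) ^ 2) ≤
      2 * sSup ((fun x => H + v x) '' Ioo a b)
        * Real.sqrt (∫ p in OIv H a b v, (deriv (fun z => θ (p.1, z)) p.2) ^ 2) := by
  set M := sSup ((fun x => H + v x) '' Ioo a b)
  have hM : ∀ x ∈ Ioo a b, H + v x ≤ M := fun x hx =>
    (continuousOn_const.add hv).le_sSup_image_Ioo hx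
  have hM₀ : 0 ≤ M := by
    have hmid : (a + b) / 2 ∈ Ioo a b := ⟨by linarith, by linarith⟩
    linarith [hvH _ hmid, hM _ hmid]
  set D := ∫ p in OIv H a b v, deriv (fun z => θ (p.1, z)) p.2 ^ 2
  calc √(∫ p in OIv H a b v, θ p ^ 2) ≤ √(M ^ 2 * D) :=
        Real.sqrt_le_sqrt (setIntegral_sq_OIv_le hv hvH hM hθ hθ0)
    _ = M * √D := by rw [Real.sqrt_mul (sq_nonneg M), Real.sqrt_sq hM₀]
    _ ≤ 2 * M * √D := by nlinarith [Real.sqrt_nonneg D]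

/-- Poincaré inequality for functions that are `C¹` on the closure of `O_I(v)` and
vanish on the graph of `v`:
`‖θ‖_{L²(O_I(v))} ≤ 2 M_v ‖∂_z θ‖_{L²(O_I(v))}`, with `M_v = sup_I (H+v)`. -/
theorem stmt_3 (H a b : ℝ) (hH : 0 < H) (hab : a < b) (v : ℝ → ℝ)
    (hv : ContinuousOn v (Icc a b)) (hvH : ∀ x ∈ Ioo a b, -H < v x)
    (θ : ℝ × ℝ → ℝ)
    (hθ : ContDiffOn ℝ 1 θ (closure (OIv H a b v)))
    (hθ0 : ∀ x ∈ Ioo a b, θ (x, v x) = 0) :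
    Real.sqrt (∫ p in OIv H a b v, (θ p) ^ 2) ≤
      2 * sSup ((fun x => H + v x) '' Ioo a b)
        * Real.sqrt (∫ p in OIv H a b v, (deriv (fun z => θ (p.1, z)) p.2) ^ 2) :=
  stmt_3_general H a b hab v hv hvH θ hθ hθ0
end

section
/- Let I = (a,b) be a bounded open interval, let μ ∈ C²([a,b]), and let φ be twice continuously differentiable on [a,b] × [0,1] with: φ(a,η) = φ(b,η) = 0 for η ∈ (0,1); φ(x,1) = 0 for x ∈ I; and -∂_η φ(x,0) + μ(x) φ(x,0) = 0 for x ∈ I. Then ∫_{R_I} ∂_x²φ ∂_η²φ d(x,η) = ∫_{R_I} |∂_x ∂_η φ|² d(x,η) + ∫_I ∂_x φ(x,0) · (d/dx)[μ(x) φ(x,0)] dx. -/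
/-!
The integrand `∂ₓ²φ ∂ᵧ²φ - (∂ₓ∂ᵧφ)²` is the divergence of `(∂ₓφ ∂ᵧ²φ, -∂ₓφ ∂ₓ∂ᵧφ)`, so for `C³`
functions the divergence theorem writes its integral over any box as a boundary integral. Both
sides only involve derivatives of order at most two and are stable under bounded pointwise
convergence of them, so the formula passes to `C²` functions with compact support by mollification,
then to `C²` functions near the box by a cutoff, and finally to the closed rectangle, by letting
inner boxes grow to it: the one-sided derivatives are continuous up to the boundary. On `R_I` the
Dirichlet conditions kill the lateral and top boundary terms, and on the bottom edge the Robin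
condition turns `∂_ηφ(·,0)` into `μ φ(·,0)`.
-/

open MeasureTheory Set Filter Topology intervalIntegral
open scoped Manifold ContDiff Convolution

section PartialDeriv

variable {E F : Type*} [NormedAddCommGroup E] [NormedSpace ℝ E] [NormedAddCommGroup F]
  [NormedSpace ℝ F]

noncomputable def partialDeriv (v : E) (f : E → F) : E → F := fun p => fderiv ℝ f p v

noncomputable def partialDerivWithin (s : Set E) (v : E) (f : E → F) : E → F :=
  fun p => fderivWithin ℝ f s p v

theorem ContDiff.partialDeriv {n m : WithTop ℕ∞} {f : E → F} (hf : ContDiff ℝ n f)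
    (hmn : m + 1 ≤ n) (v : E) : ContDiff ℝ m (partialDeriv v f) :=
  (hf.fderiv_right hmn).clm_apply contDiff_const

theorem ContDiffOn.partialDerivWithin {n m : WithTop ℕ∞} {f : E → F} {s : Set E}
    (hf : ContDiffOn ℝ n f s) (hs : UniqueDiffOn ℝ s) (hmn : m + 1 ≤ n) (v : E) :
    ContDiffOn ℝ m (partialDerivWithin s v f) s :=
  (hf.fderivWithin hs hmn).clm_apply contDiffOn_const

theorem HasCompactSupport.partialDeriv {f : E → F} (hf : HasCompactSupport f) (v : E) :
    HasCompactSupport (partialDeriv v f) :=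
  (hf.fderiv ℝ).comp_left (g := fun L : E →L[ℝ] F => L v) rfl

theorem Filter.EventuallyEq.partialDeriv_eq {f g : E → F} {p : E} (h : f =ᶠ[𝓝 p] g) (v : E) :
    partialDeriv v f p = partialDeriv v g p := by
  simp only [_root_.partialDeriv, h.fderiv_eq]

theorem Filter.EventuallyEq.partialDeriv {f g : E → F} {p : E} (h : f =ᶠ[𝓝 p] g) (v : E) :
    partialDeriv v f =ᶠ[𝓝 p] partialDeriv v g :=
  (h.fderiv (𝕜 := ℝ)).mono fun _ hq => by simp only [_root_.partialDeriv, hq]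

theorem partialDerivWithin_eventuallyEq {f : E → F} {s : Set E} {p : E} (hs : s ∈ 𝓝 p)
    (v : E) : partialDerivWithin s v f =ᶠ[𝓝 p] partialDeriv v f :=
  (eventually_eventually_nhds.2 hs).mono fun _ (hq : s ∈ 𝓝 _) =>
    congrArg (fun L : E →L[ℝ] F => L v) (fderivWithin_of_mem_nhds hq)

theorem partialDerivWithin_partialDerivWithin_eq {f : E → F} {s : Set E} {p : E}
    (hs : s ∈ 𝓝 p) (v w : E) :
    partialDerivWithin s w (partialDerivWithin s v f) p = partialDeriv w (partialDeriv v f) p :=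
  (partialDerivWithin_eventuallyEq hs w).eq_of_nhds.trans
    ((partialDerivWithin_eventuallyEq hs v).partialDeriv_eq w)

theorem partialDeriv_partialDeriv_eq_fderiv {f : E → F} {p : E}
    (hf : DifferentiableAt ℝ (fderiv ℝ f) p) (v w : E) :
    partialDeriv w (partialDeriv v f) p = fderiv ℝ (fderiv ℝ f) p w v := by
  change fderiv ℝ (fun q => fderiv ℝ f q v) p w = _
  simp [fderiv_clm_apply hf (differentiableAt_const v)]

theorem ContDiffAt.partialDeriv_comm {f : E → F} {p : E} {n : WithTop ℕ∞}
    (hf : ContDiffAt ℝ n f p) (hn : 2 ≤ n) (v w : E) :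
    partialDeriv w (partialDeriv v f) p = partialDeriv v (partialDeriv w f) p := by
  have hdiff : DifferentiableAt ℝ (fderiv ℝ f) p :=
    (hf.fderiv_right (m := 1) (by simpa [one_add_one_eq_two] using hn)).differentiableAt
      one_ne_zero
  rw [partialDeriv_partialDeriv_eq_fderiv hdiff, partialDeriv_partialDeriv_eq_fderiv hdiff]
  exact hf.isSymmSndFDerivAt (by simpa using hn) w v

theorem partialDeriv_mul {u w : E → ℝ} {p : E} (hu : DifferentiableAt ℝ u p)
    (hw : DifferentiableAt ℝ w p) (v : E) :
    partialDeriv v (fun q => u q * w q) p =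
      partialDeriv v u p * w p + u p * partialDeriv v w p := by
  simp only [_root_.partialDeriv, fderiv_fun_mul hu hw, add_apply, smul_apply, smul_eq_mul]
  ring

theorem partialDeriv_neg {u : E → ℝ} (v p : E) :
    partialDeriv v (fun q => -u q) p = -partialDeriv v u p := by
  simp only [_root_.partialDeriv, fderiv_fun_neg, neg_apply]

end PartialDeriv

local notation "∂ₓ" => partialDeriv ((1 : ℝ), (0 : ℝ))
local notation "∂ᵧ" => partialDeriv ((0 : ℝ), (1 : ℝ))
local notation "∂ₓ[" s "]" => partialDerivWithin s ((1 : ℝ), (0 : ℝ))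
local notation "∂ᵧ[" s "]" => partialDerivWithin s ((0 : ℝ), (1 : ℝ))

theorem continuous_parametric_intervalIntegral_of_continuous_bounds {X E : Type*}
    [TopologicalSpace X] [NormedAddCommGroup E] [NormedSpace ℝ E] {f : X → ℝ → E}
    (hf : Continuous (Function.uncurry f)) {lo hi : X → ℝ} (hlo : Continuous lo)
    (hhi : Continuous hi) : Continuous fun x => ∫ t in lo x..hi x, f x t := by
  have hint (x a b) : IntervalIntegrable (f x) volume a b :=
    (hf.uncurry_left x).intervalIntegrable _ _
  refine ((continuous_parametric_intervalIntegral_of_continuous (μ := volume) (a₀ := 0) hf hhi).sub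
    (continuous_parametric_intervalIntegral_of_continuous (μ := volume) (a₀ := 0) hf hlo)).congr
    fun x => ?_
  exact integral_interval_sub_left (hint x _ _) (hint x _ _)

structure TendstoBoundedly {ι X : Type*} [TopologicalSpace X] (F : ι → X → ℝ) (l : Filter ι)
    (f : X → ℝ) : Prop where
  continuous : ∀ i, Continuous (F i)
  bounded : ∃ C, ∀ i x, |F i x| ≤ C
  tendsto : ∀ x, Tendsto (fun i => F i x) l (𝓝 (f x))

namespace TendstoBoundedly

variable {ι X Y : Type*} [TopologicalSpace X] [TopologicalSpace Y] {l : Filter ι}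
  {F G : ι → X → ℝ} {f g : X → ℝ}

theorem mul (hF : TendstoBoundedly F l f) (hG : TendstoBoundedly G l g) :
    TendstoBoundedly (fun i x => F i x * G i x) l (fun x => f x * g x) where
  continuous i := (hF.continuous i).mul (hG.continuous i)
  bounded := by
    obtain ⟨C, hC⟩ := hF.bounded
    obtain ⟨D, hD⟩ := hG.bounded
    refine ⟨C * D, fun i x => ?_⟩
    rw [abs_mul]
    exact mul_le_mul (hC i x) (hD i x) (abs_nonneg _) ((abs_nonneg _).trans (hC i x))
  tendsto x := (hF.tendsto x).mul (hG.tendsto x)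

theorem sub (hF : TendstoBoundedly F l f) (hG : TendstoBoundedly G l g) :
    TendstoBoundedly (fun i x => F i x - G i x) l (fun x => f x - g x) where
  continuous i := (hF.continuous i).sub (hG.continuous i)
  bounded := by
    obtain ⟨C, hC⟩ := hF.bounded
    obtain ⟨D, hD⟩ := hG.bounded
    exact ⟨C + D, fun i x => (abs_sub _ _).trans (add_le_add (hC i x) (hD i x))⟩
  tendsto x := (hF.tendsto x).sub (hG.tendsto x)

theorem neg (hF : TendstoBoundedly F l f) :
    TendstoBoundedly (fun i x => -F i x) l (fun x => -f x) where
  continuous i := (hF.continuous i).neg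
  bounded := by
    obtain ⟨C, hC⟩ := hF.bounded
    exact ⟨C, fun i x => (abs_neg (F i x)).trans_le (hC i x)⟩
  tendsto x := (hF.tendsto x).neg

theorem comp (hF : TendstoBoundedly F l f) {g : Y → X} (hg : Continuous g) :
    TendstoBoundedly (fun i y => F i (g y)) l (fun y => f (g y)) where
  continuous i := (hF.continuous i).comp hg
  bounded := by
    obtain ⟨C, hC⟩ := hF.bounded
    exact ⟨C, fun i y => hC i (g y)⟩
  tendsto y := hF.tendsto (g y)

theorem tendsto_intervalIntegral [l.IsCountablyGenerated] {F : ι → ℝ → ℝ} {f : ℝ → ℝ}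
    (hF : TendstoBoundedly F l f) (a b : ℝ) :
    Tendsto (fun i => ∫ t in a..b, F i t) l (𝓝 (∫ t in a..b, f t)) := by
  obtain ⟨C, hC⟩ := hF.bounded
  exact tendsto_integral_filter_of_dominated_convergence (fun _ => C)
    (Eventually.of_forall fun i => (hF.continuous i).aestronglyMeasurable)
    (Eventually.of_forall fun i => ae_of_all _ fun t _ => hC i t) intervalIntegrable_const
    (ae_of_all _ fun t _ => hF.tendsto t)

theorem tendsto_intervalIntegral₂ [l.IsCountablyGenerated] {F : ι → ℝ × ℝ → ℝ}
    {f : ℝ × ℝ → ℝ} (hF : TendstoBoundedly F l f) (x₀ x₁ y₀ y₁ : ℝ) :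
    Tendsto (fun i => ∫ x in x₀..x₁, ∫ y in y₀..y₁, F i (x, y)) l
      (𝓝 (∫ x in x₀..x₁, ∫ y in y₀..y₁, f (x, y))) := by
  obtain ⟨C, hC⟩ := hF.bounded
  refine TendstoBoundedly.tendsto_intervalIntegral ⟨fun i => ?_, ⟨C * |y₁ - y₀|, fun i x => ?_⟩,
    fun x => (hF.comp (Continuous.prodMk_right x)).tendsto_intervalIntegral y₀ y₁⟩ x₀ x₁
  · exact continuous_parametric_intervalIntegral_of_continuous' (μ := volume)
      (show Continuous (Function.uncurry fun x y => F i (x, y)) from hF.continuous i) y₀ y₁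
  · exact norm_integral_le_of_norm_le_const fun y _ =>
      (Real.norm_eq_abs _).trans_le (hC i (x, y))

end TendstoBoundedly

/-- When `fx, fxx, fxy, fyy` are `∂ₓf, ∂ₓ²f, ∂ₓ∂ᵧf, ∂ᵧ²f`, this is the divergence theorem on the
box `[x₀, x₁] × [y₀, y₁]` for the field `(∂ₓf ∂ᵧ²f, -∂ₓf ∂ₓ∂ᵧf)`, whose divergence is the Hessian
determinant `∂ₓ²f ∂ᵧ²f - (∂ₓ∂ᵧf)²` when `f` is `C³`. -/
def HessianDetBoxFormula (fx fxx fxy fyy : ℝ × ℝ → ℝ) (x₀ x₁ y₀ y₁ : ℝ) : Prop :=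
  (∫ x in x₀..x₁, ∫ y in y₀..y₁, (fxx (x, y) * fyy (x, y) - fxy (x, y) ^ 2)) =
    (((∫ x in x₀..x₁, -(fx (x, y₁) * fxy (x, y₁))) - ∫ x in x₀..x₁, -(fx (x, y₀) * fxy (x, y₀)))
      + ∫ y in y₀..y₁, fx (x₁, y) * fyy (x₁, y)) - ∫ y in y₀..y₁, fx (x₀, y) * fyy (x₀, y)

namespace HessianDetBoxFormula

variable {fx fxx fxy fyy : ℝ × ℝ → ℝ} {x₀ x₁ y₀ y₁ : ℝ}

theorem congr {gx gxx gxy gyy : ℝ × ℝ → ℝ}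
    (h : HessianDetBoxFormula fx fxx fxy fyy x₀ x₁ y₀ y₁)
    (hx : EqOn fx gx (uIcc x₀ x₁ ×ˢ uIcc y₀ y₁)) (hxx : EqOn fxx gxx (uIcc x₀ x₁ ×ˢ uIcc y₀ y₁))
    (hxy : EqOn fxy gxy (uIcc x₀ x₁ ×ˢ uIcc y₀ y₁))
    (hyy : EqOn fyy gyy (uIcc x₀ x₁ ×ˢ uIcc y₀ y₁)) :
    HessianDetBoxFormula gx gxx gxy gyy x₀ x₁ y₀ y₁ := by
  have mem {x y} (hx : x ∈ uIcc x₀ x₁) (hy : y ∈ uIcc y₀ y₁) :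
      (x, y) ∈ uIcc x₀ x₁ ×ˢ uIcc y₀ y₁ := ⟨hx, hy⟩
  unfold HessianDetBoxFormula at h ⊢
  refine Eq.trans ?_ (h.trans ?_)
  · refine integral_congr fun x hx' => integral_congr fun y hy' => ?_
    simp only [hxx (mem hx' hy'), hyy (mem hx' hy'), hxy (mem hx' hy')]
  refine congrArg₂ _ (congrArg₂ _ (congrArg₂ _ ?_ ?_) ?_) ?_ <;>
    refine integral_congr fun t ht => ?_
  · simp only [hx (mem ht right_mem_uIcc), hxy (mem ht right_mem_uIcc)]
  · simp only [hx (mem ht left_mem_uIcc), hxy (mem ht left_mem_uIcc)]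
  · simp only [hx (mem right_mem_uIcc ht), hyy (mem right_mem_uIcc ht)]
  · simp only [hx (mem left_mem_uIcc ht), hyy (mem left_mem_uIcc ht)]

theorem of_tendstoBoundedly {ι : Type*} {l : Filter ι} [l.IsCountablyGenerated] [l.NeBot]
    {Fx Fxx Fxy Fyy : ι → ℝ × ℝ → ℝ} (hx : TendstoBoundedly Fx l fx)
    (hxx : TendstoBoundedly Fxx l fxx) (hxy : TendstoBoundedly Fxy l fxy)
    (hyy : TendstoBoundedly Fyy l fyy)
    (h : ∀ᶠ i in l, HessianDetBoxFormula (Fx i) (Fxx i) (Fxy i) (Fyy i) x₀ x₁ y₀ y₁) :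
    HessianDetBoxFormula fx fxx fxy fyy x₀ x₁ y₀ y₁ := by
  have area := ((hxx.mul hyy).sub (hxy.mul hxy)).tendsto_intervalIntegral₂ x₀ x₁ y₀ y₁
  simp only [← sq] at area
  have horiz (y : ℝ) :=
    ((hx.mul hxy).neg.comp (Continuous.prodMk_left y)).tendsto_intervalIntegral x₀ x₁
  have vert (x : ℝ) :=
    ((hx.mul hyy).comp (Continuous.prodMk_right x)).tendsto_intervalIntegral y₀ y₁
  exact tendsto_nhds_unique area <| (((horiz y₁).sub (horiz y₀)).add (vert x₁)).sub (vert x₀)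
    |>.congr' <| h.mono fun _ hi => hi.symm

end HessianDetBoxFormula

theorem isClosed_setOf_hessianDetBoxFormula {X : Type*} [TopologicalSpace X]
    {fx fxx fxy fyy : ℝ × ℝ → ℝ} (hx : Continuous fx) (hxx : Continuous fxx)
    (hxy : Continuous fxy) (hyy : Continuous fyy) {x₀ x₁ y₀ y₁ : X → ℝ} (hx₀ : Continuous x₀)
    (hx₁ : Continuous x₁) (hy₀ : Continuous y₀) (hy₁ : Continuous y₁) :
    IsClosed {t | HessianDetBoxFormula fx fxx fxy fyy (x₀ t) (x₁ t) (y₀ t) (y₁ t)} := by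
  have horiz {y : X → ℝ} (hy : Continuous y) :=
    continuous_parametric_intervalIntegral_of_continuous_bounds
      (f := fun t x => -(fx (x, y t) * fxy (x, y t))) (by fun_prop) hx₀ hx₁
  have vert {x : X → ℝ} (hx' : Continuous x) :=
    continuous_parametric_intervalIntegral_of_continuous_bounds
      (f := fun t y => fx (x t, y) * fyy (x t, y)) (by fun_prop) hy₀ hy₁
  refine isClosed_eq ?_ ((((horiz hy₁).sub (horiz hy₀)).add (vert hx₁)).sub (vert hx₀))
  refine continuous_parametric_intervalIntegral_of_continuous_bounds ?_ hx₀ hx₁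
  exact continuous_parametric_intervalIntegral_of_continuous_bounds
    (f := fun p y => fxx (p.2, y) * fyy (p.2, y) - fxy (p.2, y) ^ 2) (by fun_prop)
    (hy₀.comp continuous_fst) (hy₁.comp continuous_fst)

theorem divergence_hessianDetField {f : ℝ × ℝ → ℝ} (hf : ContDiff ℝ 3 f) (p : ℝ × ℝ) :
    ∂ₓ (fun q => ∂ₓ f q * ∂ᵧ (∂ᵧ f) q) p + ∂ᵧ (fun q => -(∂ₓ f q * ∂ₓ (∂ᵧ f) q)) p =
      ∂ₓ (∂ₓ f) p * ∂ᵧ (∂ᵧ f) p - ∂ₓ (∂ᵧ f) p ^ 2 := by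
  have h2 (v) : ContDiff ℝ 2 (partialDeriv v f) := hf.partialDeriv (by norm_num) v
  have h1 (v w) : ContDiff ℝ 1 (partialDeriv w (partialDeriv v f)) :=
    (h2 v).partialDeriv (by norm_num) w
  have d1 (v) := (h2 v).differentiable (by norm_num) p
  have d2 (v w) := (h1 v w).differentiable (by norm_num) p
  rw [partialDeriv_neg, partialDeriv_mul (d1 _) (d2 _ _), partialDeriv_mul (d1 _) (d2 _ _),
    hf.contDiffAt.partialDeriv_comm (by norm_num) ((0 : ℝ), (1 : ℝ)) ((1 : ℝ), (0 : ℝ)),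
    (h2 _).contDiffAt.partialDeriv_comm le_rfl ((0 : ℝ), (1 : ℝ)) ((1 : ℝ), (0 : ℝ))]
  ring

theorem hessianDetBoxFormula_of_contDiff {f : ℝ × ℝ → ℝ} (hf : ContDiff ℝ 3 f)
    (x₀ x₁ y₀ y₁ : ℝ) :
    HessianDetBoxFormula (∂ₓ f) (∂ₓ (∂ₓ f)) (∂ₓ (∂ᵧ f)) (∂ᵧ (∂ᵧ f)) x₀ x₁ y₀ y₁ := by
  have h2 (v) : ContDiff ℝ 2 (partialDeriv v f) := hf.partialDeriv (by norm_num) v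
  have h1 (v w) : ContDiff ℝ 1 (partialDeriv w (partialDeriv v f)) :=
    (h2 v).partialDeriv (by norm_num) w
  set F : ℝ × ℝ → ℝ := fun q => ∂ₓ f q * ∂ᵧ (∂ᵧ f) q
  set G : ℝ × ℝ → ℝ := fun q => -(∂ₓ f q * ∂ₓ (∂ᵧ f) q)
  have hF : ContDiff ℝ 1 F := ((h2 _).of_le (by norm_num)).mul (h1 _ _)
  have hG : ContDiff ℝ 1 G := (((h2 _).of_le (by norm_num)).mul (h1 _ _)).neg
  have hdiv : (fun p => ∂ₓ F p + ∂ᵧ G p) = _ := funext (divergence_hessianDetField hf)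
  have hint : IntegrableOn (fun p => ∂ₓ F p + ∂ᵧ G p) (uIcc x₀ x₁ ×ˢ uIcc y₀ y₁) := by
    rw [hdiv]
    exact (((h1 _ _).continuous.mul (h1 _ _).continuous).sub
      ((h1 _ _).continuous.pow 2)).continuousOn.integrableOn_compact
      (isCompact_uIcc.prod isCompact_uIcc)
  have key := integral2_divergence_prod_of_hasFDerivAt F G _ _ x₀ y₀ x₁ y₁
    hF.continuous.continuousOn hG.continuous.continuousOn
    (fun p _ => (hF.differentiable one_ne_zero p).hasFDerivAt)
    (fun p _ => (hG.differentiable one_ne_zero p).hasFDerivAt) hint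
  exact (integral_congr fun x _ => integral_congr fun y _ =>
    (congrFun hdiv (x, y)).symm).trans key

section Mollify

variable {E : Type*} [NormedAddCommGroup E]

noncomputable def shrinkingBump (n : ℕ) : ContDiffBump (0 : E) :=
  ⟨((n : ℝ) + 1)⁻¹ / 2, ((n : ℝ) + 1)⁻¹, by positivity, half_lt_self (by positivity)⟩

theorem tendsto_shrinkingBump_rOut :
    Tendsto (fun n => (shrinkingBump n : ContDiffBump (0 : E)).rOut) atTop (𝓝 0) :=
  tendsto_inv_atTop_zero.comp (tendsto_natCast_atTop_atTop.atTop_add tendsto_const_nhds)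

variable [NormedSpace ℝ E] [FiniteDimensional ℝ E] [MeasurableSpace E] [BorelSpace E]
  [HasContDiffBump E] (μ : Measure E) [μ.IsAddHaarMeasure]

theorem tendstoBoundedly_convolution_shrinkingBump {g : E → ℝ} (hg : Continuous g)
    (hgc : HasCompactSupport g) :
    TendstoBoundedly
      (fun n => (shrinkingBump n).normed μ ⋆[ContinuousLinearMap.lsmul ℝ ℝ, μ] g) atTop g where
  continuous n :=
    hgc.continuous_convolution_right _ (shrinkingBump n).continuous_normed.locallyIntegrable hg
  bounded := by
    obtain ⟨C, hC⟩ := hg.bounded_above_of_compact_support hgc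
    refine ⟨C, fun n x => ?_⟩
    simpa using dist_convolution_le (x₀ := x) (z₀ := 0) ((norm_nonneg _).trans (hC 0))
      (shrinkingBump n).support_normed_eq.subset (shrinkingBump n).nonneg_normed
      ((shrinkingBump n).integral_normed (μ := μ)) hg.aestronglyMeasurable fun y _ => by
        simpa using hC y
  tendsto := ContDiffBump.convolution_tendsto_right_of_continuous tendsto_shrinkingBump_rOut hg

theorem ContDiffBump.partialDeriv_normed_convolution (k : ContDiffBump (0 : E)) {g : E → ℝ}
    (hg : ContDiff ℝ 1 g) (hgc : HasCompactSupport g) (v : E) :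
    partialDeriv v (k.normed μ ⋆[ContinuousLinearMap.lsmul ℝ ℝ, μ] g) =
      k.normed μ ⋆[ContinuousLinearMap.lsmul ℝ ℝ, μ] partialDeriv v g := by
  funext p
  rw [partialDeriv, (hgc.hasFDerivAt_convolution_right _
    k.continuous_normed.locallyIntegrable hg p).fderiv]
  exact convolution_precompR_apply _ k.continuous_normed.locallyIntegrable (hgc.fderiv ℝ)
    (hg.continuous_fderiv one_ne_zero) p v

end Mollify

theorem hessianDetBoxFormula_of_contDiff_of_hasCompactSupport {f : ℝ × ℝ → ℝ}
    (hf : ContDiff ℝ 2 f) (hfc : HasCompactSupport f) (x₀ x₁ y₀ y₁ : ℝ) :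
    HessianDetBoxFormula (∂ₓ f) (∂ₓ (∂ₓ f)) (∂ₓ (∂ᵧ f)) (∂ᵧ (∂ᵧ f)) x₀ x₁ y₀ y₁ := by
  have h1 (v) : ContDiff ℝ 1 (partialDeriv v f) := hf.partialDeriv (by norm_num) v
  have h0 (v w) : ContDiff ℝ 0 (partialDeriv w (partialDeriv v f)) :=
    (h1 v).partialDeriv (by norm_num) w
  have hc1 (v) : HasCompactSupport (partialDeriv v f) := hfc.partialDeriv v
  have lim1 (v) := tendstoBoundedly_convolution_shrinkingBump volume (h1 v).continuous (hc1 v)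
  have lim2 (v w) := tendstoBoundedly_convolution_shrinkingBump volume
    (h0 v w).continuous ((hc1 v).partialDeriv w)
  refine .of_tendstoBoundedly (lim1 _) (lim2 _ _) (lim2 _ _) (lim2 _ _)
    (Eventually.of_forall fun n => ?_)
  have hsmooth : ContDiff ℝ 3
      ((shrinkingBump n).normed volume ⋆[ContinuousLinearMap.lsmul ℝ ℝ, volume] f) :=
    (shrinkingBump n).hasCompactSupport_normed.contDiff_convolution_left (n := 3) _
      (shrinkingBump n).contDiff_normed hf.continuous.locallyIntegrable
  simpa only [(shrinkingBump n).partialDeriv_normed_convolution volume (hf.of_le one_le_two) hfc,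
    (shrinkingBump n).partialDeriv_normed_convolution volume (h1 _) (hc1 _)]
    using hessianDetBoxFormula_of_contDiff hsmooth x₀ x₁ y₀ y₁

theorem ContDiffOn.exists_contDiff_hasCompactSupport_eventuallyEq {E F : Type*}
    [NormedAddCommGroup E] [NormedSpace ℝ E] [FiniteDimensional ℝ E] [NormedAddCommGroup F]
    [NormedSpace ℝ F] {n : ℕ∞} {f : E → F} {U K : Set E} (hf : ContDiffOn ℝ n f U)
    (hU : IsOpen U) (hK : IsCompact K) (hKU : K ⊆ U) :
    ∃ g : E → F, ContDiff ℝ n g ∧ HasCompactSupport g ∧ g =ᶠ[𝓝ˢ K] f := by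
  obtain ⟨L, hL, hKL, hLU⟩ := exists_compact_between hK hU hKU
  obtain ⟨χ, hχ0, hχ1, -⟩ := exists_contMDiffMap_zero_one_nhds_of_isClosed 𝓘(ℝ, E) (n := n)
    isOpen_interior.isClosed_compl hK.isClosed (disjoint_compl_left_iff_subset.2 hKL)
  have hχ : ContDiff ℝ n χ := contMDiff_iff_contDiff.1 χ.contMDiff
  refine ⟨fun x => χ x • f x, contDiff_iff_contDiffAt.2 fun x => ?_,
    HasCompactSupport.intro hL fun x hx => ?_, hχ1.mono fun x hx => by simp [hx]⟩
  · by_cases hx : x ∈ U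
    · exact hχ.contDiffAt.smul (hf.contDiffAt (hU.mem_nhds hx))
    have hχx : ∀ᶠ y in 𝓝 x, χ y = 0 := hχ0.filter_mono <| nhds_le_nhdsSet
      (show x ∈ (interior L)ᶜ from fun hx' => hx (hLU (interior_subset hx')))
    exact (contDiffAt_const (c := (0 : F))).congr_of_eventuallyEq
      (hχx.mono fun y hy => by simp [hy])
  · simp [hχ0.self_of_nhdsSet x fun hx' => hx (interior_subset hx')]

theorem hessianDetBoxFormula_of_contDiffOn {f : ℝ × ℝ → ℝ} {U : Set (ℝ × ℝ)}
    (hf : ContDiffOn ℝ 2 f U) (hU : IsOpen U) {x₀ x₁ y₀ y₁ : ℝ}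
    (hbox : uIcc x₀ x₁ ×ˢ uIcc y₀ y₁ ⊆ U) :
    HessianDetBoxFormula (∂ₓ f) (∂ₓ (∂ₓ f)) (∂ₓ (∂ᵧ f)) (∂ᵧ (∂ᵧ f)) x₀ x₁ y₀ y₁ := by
  obtain ⟨g, hg, hgc, hgf⟩ := hf.exists_contDiff_hasCompactSupport_eventuallyEq hU
    (isCompact_uIcc.prod isCompact_uIcc) hbox
  have hloc : ∀ p ∈ uIcc x₀ x₁ ×ˢ uIcc y₀ y₁, g =ᶠ[𝓝 p] f := fun p hp =>
    hgf.filter_mono (nhds_le_nhdsSet hp)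
  exact (hessianDetBoxFormula_of_contDiff_of_hasCompactSupport hg hgc x₀ x₁ y₀ y₁).congr
    (fun p hp => (hloc p hp).partialDeriv_eq _)
    (fun p hp => ((hloc p hp).partialDeriv _).partialDeriv_eq _)
    (fun p hp => ((hloc p hp).partialDeriv _).partialDeriv_eq _)
    (fun p hp => ((hloc p hp).partialDeriv _).partialDeriv_eq _)

theorem HessianDetBoxFormula.of_forall_subset_Ioo_prod_Ioo {fx fxx fxy fyy : ℝ × ℝ → ℝ}
    {a b c d : ℝ} (hab : a < b) (hcd : c < d) (hx : ContinuousOn fx (Icc a b ×ˢ Icc c d))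
    (hxx : ContinuousOn fxx (Icc a b ×ˢ Icc c d)) (hxy : ContinuousOn fxy (Icc a b ×ˢ Icc c d))
    (hyy : ContinuousOn fyy (Icc a b ×ˢ Icc c d))
    (h : ∀ x₀ x₁ y₀ y₁, uIcc x₀ x₁ ×ˢ uIcc y₀ y₁ ⊆ Ioo a b ×ˢ Ioo c d →
      HessianDetBoxFormula fx fxx fxy fyy x₀ x₁ y₀ y₁) :
    HessianDetBoxFormula fx fxx fxy fyy a b c d := by
  set R := Icc a b ×ˢ Icc c d
  -- Composing with the projection onto `R` extends the four functions continuously to the plane.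
  set π : ℝ × ℝ → ℝ × ℝ := fun p => ((projIcc a b hab.le p.1 : ℝ), (projIcc c d hcd.le p.2 : ℝ))
  have ext {g : ℝ × ℝ → ℝ} (hg : ContinuousOn g R) : Continuous (g ∘ π) :=
    hg.comp_continuous (by fun_prop) fun _ => ⟨Subtype.prop _, Subtype.prop _⟩
  have agree (g : ℝ × ℝ → ℝ) : EqOn (g ∘ π) g R := fun p hp =>
    congrArg g (Prod.ext (congrArg Subtype.val (projIcc_of_mem hab.le hp.1))
      (congrArg Subtype.val (projIcc_of_mem hcd.le hp.2)))
  have hclosed := isClosed_setOf_hessianDetBoxFormula (ext hx) (ext hxx) (ext hxy) (ext hyy)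
    (x₀ := fun ε => a + ε) (x₁ := fun ε => b - ε) (y₀ := fun ε => c + ε) (y₁ := fun ε => d - ε)
    (by fun_prop) (by fun_prop) (by fun_prop) (by fun_prop)
  have hbox : ∀ᶠ ε in 𝓝[>] (0 : ℝ),
      uIcc (a + ε) (b - ε) ×ˢ uIcc (c + ε) (d - ε) ⊆ Ioo a b ×ˢ Ioo c d := by
    filter_upwards [Ioo_mem_nhdsGT (lt_min (half_pos (sub_pos.2 hab)) (half_pos (sub_pos.2 hcd)))]
      with ε ⟨hε, hεab⟩
    rw [lt_min_iff] at hεab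
    rw [uIcc_of_le (by linarith), uIcc_of_le (by linarith)]
    exact prod_mono (Icc_subset_Ioo (by linarith) (by linarith))
      (Icc_subset_Ioo (by linarith) (by linarith))
  have h0 := hclosed.mem_of_tendsto (b := 𝓝[>] (0 : ℝ)) (f := id) nhdsWithin_le_nhds <|
    hbox.mono fun ε hε =>
      have hεR := hε.trans (prod_mono Ioo_subset_Icc_self Ioo_subset_Icc_self)
      (h _ _ _ _ hε).congr ((agree fx).symm.mono hεR) ((agree fxx).symm.mono hεR)
        ((agree fxy).symm.mono hεR) ((agree fyy).symm.mono hεR)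
  simp only [add_zero, sub_zero, mem_ofPred_eq] at h0
  have hR : uIcc a b ×ˢ uIcc c d ⊆ R := by rw [uIcc_of_le hab.le, uIcc_of_le hcd.le]
  exact h0.congr ((agree fx).mono hR) ((agree fxx).mono hR) ((agree fxy).mono hR)
    ((agree fyy).mono hR)

section RectangleRegularity

variable {f : ℝ × ℝ → ℝ} {a b c d : ℝ}

theorem contDiffOn_partialDerivWithin_Icc_prod (hf : ContDiffOn ℝ 2 f (Icc a b ×ˢ Icc c d))
    (hab : a < b) (hcd : c < d) (v : ℝ × ℝ) :
    ContDiffOn ℝ 1 (partialDerivWithin (Icc a b ×ˢ Icc c d) v f) (Icc a b ×ˢ Icc c d) :=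
  hf.partialDerivWithin ((uniqueDiffOn_Icc hab).prod (uniqueDiffOn_Icc hcd)) (by norm_num) v

theorem continuousOn_partialDerivWithin_partialDerivWithin_Icc_prod
    (hf : ContDiffOn ℝ 2 f (Icc a b ×ˢ Icc c d)) (hab : a < b) (hcd : c < d) (v w : ℝ × ℝ) :
    ContinuousOn (partialDerivWithin (Icc a b ×ˢ Icc c d) w
      (partialDerivWithin (Icc a b ×ˢ Icc c d) v f)) (Icc a b ×ˢ Icc c d) :=
  ((contDiffOn_partialDerivWithin_Icc_prod hf hab hcd v).partialDerivWithin
    ((uniqueDiffOn_Icc hab).prod (uniqueDiffOn_Icc hcd)) (m := 0) (by norm_num) w).continuousOn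

theorem ContinuousOn.integrableOn_Ioo_prod_Ioo {g : ℝ × ℝ → ℝ}
    (hg : ContinuousOn g (Icc a b ×ˢ Icc c d)) : IntegrableOn g (Ioo a b ×ˢ Ioo c d) :=
  (hg.integrableOn_compact (isCompact_Icc.prod isCompact_Icc)).mono_set
    (prod_mono Ioo_subset_Icc_self Ioo_subset_Icc_self)

end RectangleRegularity

theorem hessianDetBoxFormula_of_contDiffOn_Icc {f : ℝ × ℝ → ℝ} {a b c d : ℝ} (hab : a < b)
    (hcd : c < d) (hf : ContDiffOn ℝ 2 f (Icc a b ×ˢ Icc c d)) :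
    HessianDetBoxFormula (∂ₓ[Icc a b ×ˢ Icc c d] f)
      (∂ₓ[Icc a b ×ˢ Icc c d] (∂ₓ[Icc a b ×ˢ Icc c d] f))
      (∂ₓ[Icc a b ×ˢ Icc c d] (∂ᵧ[Icc a b ×ˢ Icc c d] f))
      (∂ᵧ[Icc a b ×ˢ Icc c d] (∂ᵧ[Icc a b ×ˢ Icc c d] f)) a b c d := by
  set R := Icc a b ×ˢ Icc c d
  have hUR : Ioo a b ×ˢ Ioo c d ⊆ R := prod_mono Ioo_subset_Icc_self Ioo_subset_Icc_self
  have hRnhds : ∀ p ∈ Ioo a b ×ˢ Ioo c d, R ∈ 𝓝 p := fun p hp =>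
    mem_of_superset ((isOpen_Ioo.prod isOpen_Ioo).mem_nhds hp) hUR
  have c0 := continuousOn_partialDerivWithin_partialDerivWithin_Icc_prod hf hab hcd
  refine .of_forall_subset_Ioo_prod_Ioo hab hcd
    (contDiffOn_partialDerivWithin_Icc_prod hf hab hcd _).continuousOn (c0 _ _) (c0 _ _) (c0 _ _)
    fun x₀ x₁ y₀ y₁ hbox => ?_
  refine (hessianDetBoxFormula_of_contDiffOn (hf.mono hUR) (isOpen_Ioo.prod isOpen_Ioo)
    hbox).congr ?_ ?_ ?_ ?_
  · exact fun p hp => (partialDerivWithin_eventuallyEq (hRnhds p (hbox hp)) _).eq_of_nhds.symm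
  all_goals exact fun p hp =>
    (partialDerivWithin_partialDerivWithin_eq (hRnhds p (hbox hp)) _ _).symm

section Slices

variable {F : Type*} [NormedAddCommGroup F] [NormedSpace ℝ F] {f : ℝ × ℝ → F} {a b c d x y : ℝ}

theorem DifferentiableOn.hasDerivWithinAt_partialDerivWithin_fst
    (hf : DifferentiableOn ℝ f (Icc a b ×ˢ Icc c d)) (hx : x ∈ Icc a b) (hy : y ∈ Icc c d) :
    HasDerivWithinAt (fun t => f (t, y)) (∂ₓ[Icc a b ×ˢ Icc c d] f (x, y)) (Icc a b) x :=
  (hf (x, y) ⟨hx, hy⟩).hasFDerivWithinAt.comp_hasDerivWithinAt x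
    ((hasDerivAt_id' x).prodMk (hasDerivAt_const x y)).hasDerivWithinAt
    fun t ht => (⟨ht, hy⟩ : (t, y) ∈ Icc a b ×ˢ Icc c d)

theorem DifferentiableOn.hasDerivWithinAt_partialDerivWithin_snd
    (hf : DifferentiableOn ℝ f (Icc a b ×ˢ Icc c d)) (hx : x ∈ Icc a b) (hy : y ∈ Icc c d) :
    HasDerivWithinAt (fun t => f (x, t)) (∂ᵧ[Icc a b ×ˢ Icc c d] f (x, y)) (Icc c d) y :=
  (hf (x, y) ⟨hx, hy⟩).hasFDerivWithinAt.comp_hasDerivWithinAt y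
    ((hasDerivAt_const y x).prodMk (hasDerivAt_id' y)).hasDerivWithinAt fun _ ht => ⟨hx, ht⟩

theorem DifferentiableOn.hasDerivAt_partialDerivWithin_fst
    (hf : DifferentiableOn ℝ f (Icc a b ×ˢ Icc c d)) (hx : x ∈ Ioo a b) (hy : y ∈ Icc c d) :
    HasDerivAt (fun t => f (t, y)) (∂ₓ[Icc a b ×ˢ Icc c d] f (x, y)) x :=
  (hf.hasDerivWithinAt_partialDerivWithin_fst (Ioo_subset_Icc_self hx) hy).hasDerivAt
    (Icc_mem_nhds hx.1 hx.2)

theorem DifferentiableOn.hasDerivAt_partialDerivWithin_snd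
    (hf : DifferentiableOn ℝ f (Icc a b ×ˢ Icc c d)) (hx : x ∈ Icc a b) (hy : y ∈ Ioo c d) :
    HasDerivAt (fun t => f (x, t)) (∂ᵧ[Icc a b ×ˢ Icc c d] f (x, y)) y :=
  (hf.hasDerivWithinAt_partialDerivWithin_snd hx (Ioo_subset_Icc_self hy)).hasDerivAt
    (Icc_mem_nhds hy.1 hy.2)

theorem derivWithin_snd_eq_partialDerivWithin (hf : DifferentiableOn ℝ f (Icc a b ×ˢ Icc c d))
    (hcd : c < d) (hx : x ∈ Icc a b) (hy : y ∈ Icc c d) :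
    derivWithin (fun t => f (x, t)) (Icc c d) y = ∂ᵧ[Icc a b ×ˢ Icc c d] f (x, y) :=
  (hf.hasDerivWithinAt_partialDerivWithin_snd hx hy).derivWithin (uniqueDiffOn_Icc hcd y hy)

theorem DifferentiableOn.partialDerivWithin_fst_eq_zero
    (hf : DifferentiableOn ℝ f (Icc a b ×ˢ Icc c d)) (hx : x ∈ Ioo a b) (hy : y ∈ Icc c d)
    (h0 : ∀ t ∈ Ioo a b, f (t, y) = 0) : ∂ₓ[Icc a b ×ˢ Icc c d] f (x, y) = 0 :=
  (hf.hasDerivAt_partialDerivWithin_fst hx hy).unique <|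
    (hasDerivAt_const x (0 : F)).congr_of_eventuallyEq
      (eventually_of_mem (Ioo_mem_nhds hx.1 hx.2) h0)

theorem DifferentiableOn.partialDerivWithin_snd_eq_zero
    (hf : DifferentiableOn ℝ f (Icc a b ×ˢ Icc c d)) (hx : x ∈ Icc a b) (hy : y ∈ Ioo c d)
    (h0 : ∀ t ∈ Ioo c d, f (x, t) = 0) : ∂ᵧ[Icc a b ×ˢ Icc c d] f (x, y) = 0 :=
  (hf.hasDerivAt_partialDerivWithin_snd hx hy).unique <|
    (hasDerivAt_const y (0 : F)).congr_of_eventuallyEq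
      (eventually_of_mem (Ioo_mem_nhds hy.1 hy.2) h0)

theorem deriv_fst_eventuallyEq_partialDerivWithin (hf : DifferentiableOn ℝ f (Icc a b ×ˢ Icc c d))
    (hx : x ∈ Ioo a b) (hy : y ∈ Icc c d) :
    deriv (fun t => f (t, y)) =ᶠ[𝓝 x] fun t => ∂ₓ[Icc a b ×ˢ Icc c d] f (t, y) :=
  eventually_of_mem (Ioo_mem_nhds hx.1 hx.2) fun t (ht : t ∈ Ioo a b) =>
    (hf.hasDerivAt_partialDerivWithin_fst ht hy).deriv

theorem deriv_snd_eventuallyEq_partialDerivWithin (hf : DifferentiableOn ℝ f (Icc a b ×ˢ Icc c d))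
    (hx : x ∈ Icc a b) (hy : y ∈ Ioo c d) :
    deriv (fun t => f (x, t)) =ᶠ[𝓝 y] fun t => ∂ᵧ[Icc a b ×ˢ Icc c d] f (x, t) :=
  eventually_of_mem (Ioo_mem_nhds hy.1 hy.2) fun t (ht : t ∈ Ioo c d) =>
    (hf.hasDerivAt_partialDerivWithin_snd hx ht).deriv

end Slices

section SecondSlices

variable {f : ℝ × ℝ → ℝ} {a b c d x y : ℝ}

theorem deriv_deriv_fst_eq_partialDerivWithin (hf : DifferentiableOn ℝ f (Icc a b ×ˢ Icc c d))
    (hf' : DifferentiableOn ℝ (∂ₓ[Icc a b ×ˢ Icc c d] f) (Icc a b ×ˢ Icc c d))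
    (hx : x ∈ Ioo a b) (hy : y ∈ Icc c d) :
    deriv (deriv fun t => f (t, y)) x =
      ∂ₓ[Icc a b ×ˢ Icc c d] (∂ₓ[Icc a b ×ˢ Icc c d] f) (x, y) :=
  (deriv_fst_eventuallyEq_partialDerivWithin hf hx hy).deriv_eq.trans
    (hf'.hasDerivAt_partialDerivWithin_fst hx hy).deriv

theorem deriv_deriv_snd_eq_partialDerivWithin (hf : DifferentiableOn ℝ f (Icc a b ×ˢ Icc c d))
    (hf' : DifferentiableOn ℝ (∂ᵧ[Icc a b ×ˢ Icc c d] f) (Icc a b ×ˢ Icc c d))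
    (hx : x ∈ Icc a b) (hy : y ∈ Ioo c d) :
    deriv (deriv fun t => f (x, t)) y =
      ∂ᵧ[Icc a b ×ˢ Icc c d] (∂ᵧ[Icc a b ×ˢ Icc c d] f) (x, y) :=
  (deriv_snd_eventuallyEq_partialDerivWithin hf hx hy).deriv_eq.trans
    (hf'.hasDerivAt_partialDerivWithin_snd hx hy).deriv

theorem deriv_deriv_snd_fst_eq_partialDerivWithin
    (hf : DifferentiableOn ℝ f (Icc a b ×ˢ Icc c d))
    (hf' : DifferentiableOn ℝ (∂ᵧ[Icc a b ×ˢ Icc c d] f) (Icc a b ×ˢ Icc c d))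
    (hx : x ∈ Ioo a b) (hy : y ∈ Ioo c d) :
    deriv (fun t => deriv (fun s => f (t, s)) y) x =
      ∂ₓ[Icc a b ×ˢ Icc c d] (∂ᵧ[Icc a b ×ˢ Icc c d] f) (x, y) := by
  have hslice : (fun t => deriv (fun s => f (t, s)) y) =ᶠ[𝓝 x]
      fun t => ∂ᵧ[Icc a b ×ˢ Icc c d] f (t, y) :=
    eventually_of_mem (Ioo_mem_nhds hx.1 hx.2) fun t (ht : t ∈ Ioo a b) =>
      (hf.hasDerivAt_partialDerivWithin_snd (Ioo_subset_Icc_self ht) hy).deriv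
  exact hslice.deriv_eq.trans
    (hf'.hasDerivAt_partialDerivWithin_fst hx (Ioo_subset_Icc_self hy)).deriv

end SecondSlices

theorem setIntegral_Ioo_prod_Ioo_eq_intervalIntegral {E : Type*} [NormedAddCommGroup E]
    [NormedSpace ℝ E] {g : ℝ × ℝ → E} {a b c d : ℝ} (hab : a ≤ b) (hcd : c ≤ d)
    (hg : IntegrableOn g (Ioo a b ×ˢ Ioo c d)) :
    ∫ p in Ioo a b ×ˢ Ioo c d, g p = ∫ x in a..b, ∫ y in c..d, g (x, y) := by
  rw [Measure.volume_eq_prod] at hg ⊢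
  rw [setIntegral_prod _ hg, integral_of_le hab, integral_Ioc_eq_integral_Ioo]
  refine setIntegral_congr_fun measurableSet_Ioo fun x _ => ?_
  rw [integral_of_le hcd, integral_Ioc_eq_integral_Ioo]

section Rectangle

variable {f : ℝ × ℝ → ℝ} {a b c d : ℝ}

theorem setIntegral_deriv_deriv_mul_sub_setIntegral_sq_eq (hab : a < b) (hcd : c < d)
    (hf : ContDiffOn ℝ 2 f (Icc a b ×ˢ Icc c d)) :
    (∫ p in Ioo a b ×ˢ Ioo c d,
        deriv (deriv fun t => f (t, p.2)) p.1 * deriv (deriv fun s => f (p.1, s)) p.2) -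
      ∫ p in Ioo a b ×ˢ Ioo c d, deriv (fun t => deriv (fun s => f (t, s)) p.2) p.1 ^ 2 =
    ∫ p in Ioo a b ×ˢ Ioo c d,
      (∂ₓ[Icc a b ×ˢ Icc c d] (∂ₓ[Icc a b ×ˢ Icc c d] f) p *
          ∂ᵧ[Icc a b ×ˢ Icc c d] (∂ᵧ[Icc a b ×ˢ Icc c d] f) p -
        ∂ₓ[Icc a b ×ˢ Icc c d] (∂ᵧ[Icc a b ×ˢ Icc c d] f) p ^ 2) := by
  set R := Icc a b ×ˢ Icc c d
  set U := Ioo a b ×ˢ Ioo c d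
  have c1 := contDiffOn_partialDerivWithin_Icc_prod hf hab hcd
  have c0 := continuousOn_partialDerivWithin_partialDerivWithin_Icc_prod hf hab hcd
  have d0 : DifferentiableOn ℝ f R := hf.differentiableOn (by norm_num)
  have d1 (v) : DifferentiableOn ℝ (partialDerivWithin R v f) R :=
    (c1 v).differentiableOn one_ne_zero
  have hU : MeasurableSet U := measurableSet_Ioo.prod measurableSet_Ioo
  have hxxyy : EqOn
      (fun p => deriv (deriv fun t => f (t, p.2)) p.1 * deriv (deriv fun s => f (p.1, s)) p.2)
      (fun p => ∂ₓ[R] (∂ₓ[R] f) p * ∂ᵧ[R] (∂ᵧ[R] f) p) U := by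
    rintro ⟨x, y⟩ ⟨hx, hy⟩
    exact congrArg₂ (· * ·)
      (deriv_deriv_fst_eq_partialDerivWithin d0 (d1 _) hx (Ioo_subset_Icc_self hy))
      (deriv_deriv_snd_eq_partialDerivWithin d0 (d1 _) (Ioo_subset_Icc_self hx) hy)
  have hxy : EqOn (fun p => deriv (fun t => deriv (fun s => f (t, s)) p.2) p.1 ^ 2)
      (fun p => ∂ₓ[R] (∂ᵧ[R] f) p ^ 2) U := by
    rintro ⟨x, y⟩ ⟨hx, hy⟩
    exact congrArg (· ^ 2) (deriv_deriv_snd_fst_eq_partialDerivWithin d0 (d1 _) hx hy)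
  rw [setIntegral_congr_fun hU hxxyy, setIntegral_congr_fun hU hxy,
    integral_sub ((c0 _ _).fun_mul (c0 _ _)).integrableOn_Ioo_prod_Ioo
      ((c0 _ _).fun_pow 2).integrableOn_Ioo_prod_Ioo]

theorem setIntegral_hessianDet_eq_setIntegral_bottom (hab : a < b) (hcd : c < d)
    (hf : ContDiffOn ℝ 2 f (Icc a b ×ˢ Icc c d))
    (hlat : ∀ y ∈ Ioo c d, f (a, y) = 0 ∧ f (b, y) = 0) (htop : ∀ x ∈ Ioo a b, f (x, d) = 0) :
    ∫ p in Ioo a b ×ˢ Ioo c d,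
        (∂ₓ[Icc a b ×ˢ Icc c d] (∂ₓ[Icc a b ×ˢ Icc c d] f) p *
            ∂ᵧ[Icc a b ×ˢ Icc c d] (∂ᵧ[Icc a b ×ˢ Icc c d] f) p -
          ∂ₓ[Icc a b ×ˢ Icc c d] (∂ᵧ[Icc a b ×ˢ Icc c d] f) p ^ 2) =
      ∫ x in Ioo a b, ∂ₓ[Icc a b ×ˢ Icc c d] f (x, c) *
        ∂ₓ[Icc a b ×ˢ Icc c d] (∂ᵧ[Icc a b ×ˢ Icc c d] f) (x, c) := by
  set R := Icc a b ×ˢ Icc c d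
  have c1 := contDiffOn_partialDerivWithin_Icc_prod hf hab hcd
  have c0 := continuousOn_partialDerivWithin_partialDerivWithin_Icc_prod hf hab hcd
  have d0 : DifferentiableOn ℝ f R := hf.differentiableOn (by norm_num)
  have d1 (v) : DifferentiableOn ℝ (partialDerivWithin R v f) R :=
    (c1 v).differentiableOn one_ne_zero
  have top (x) (hx : x ∈ Ioo a b) : ∂ₓ[R] f (x, d) = 0 :=
    d0.partialDerivWithin_fst_eq_zero hx (right_mem_Icc.2 hcd.le) htop
  have left (y) (hy : y ∈ Ioo c d) : ∂ᵧ[R] (∂ᵧ[R] f) (a, y) = 0 :=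
    (d1 _).partialDerivWithin_snd_eq_zero (left_mem_Icc.2 hab.le) hy fun t ht =>
      d0.partialDerivWithin_snd_eq_zero (left_mem_Icc.2 hab.le) ht fun s hs => (hlat s hs).1
  have right (y) (hy : y ∈ Ioo c d) : ∂ᵧ[R] (∂ᵧ[R] f) (b, y) = 0 :=
    (d1 _).partialDerivWithin_snd_eq_zero (right_mem_Icc.2 hab.le) hy fun t ht =>
      d0.partialDerivWithin_snd_eq_zero (right_mem_Icc.2 hab.le) ht fun s hs => (hlat s hs).2
  rw [setIntegral_Ioo_prod_Ioo_eq_intervalIntegral hab.le hcd.le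
      (((c0 _ _).fun_mul (c0 _ _)).fun_sub ((c0 _ _).fun_pow 2)).integrableOn_Ioo_prod_Ioo,
    hessianDetBoxFormula_of_contDiffOn_Icc hab hcd hf]
  simp only [integral_of_le hab.le, integral_of_le hcd.le, integral_Ioc_eq_integral_Ioo]
  rw [setIntegral_eq_zero_of_forall_eq_zero (t := Ioo a b) fun x hx => by
      rw [top x hx, zero_mul, neg_zero],
    setIntegral_eq_zero_of_forall_eq_zero (t := Ioo c d) fun y hy => by rw [right y hy, mul_zero],
    setIntegral_eq_zero_of_forall_eq_zero (t := Ioo c d) fun y hy => by rw [left y hy, mul_zero],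
    MeasureTheory.integral_neg]
  ring

end Rectangle

theorem stmt_5_general (a b : ℝ) (hab : a < b) (μ : ℝ → ℝ) (φ : ℝ × ℝ → ℝ)
    (hφ : ContDiffOn ℝ 2 φ (Icc a b ×ˢ Icc (0:ℝ) 1))
    (hlat : ∀ η ∈ Ioo (0:ℝ) 1, φ (a, η) = 0 ∧ φ (b, η) = 0)
    (htop : ∀ x ∈ Ioo a b, φ (x, 1) = 0)
    (hrobin : ∀ x ∈ Ioo a b,
      -(derivWithin (fun η => φ (x, η)) (Icc (0:ℝ) 1) 0) + μ x * φ (x, 0) = 0) :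
    ∫ p in Ioo a b ×ˢ Ioo (0:ℝ) 1,
        (deriv (deriv (fun t => φ (t, p.2))) p.1)
          * (deriv (deriv (fun s => φ (p.1, s))) p.2) =
      (∫ p in Ioo a b ×ˢ Ioo (0:ℝ) 1,
        (deriv (fun t => deriv (fun s => φ (t, s)) p.2) p.1) ^ 2)
      + ∫ x in Ioo a b,
          (deriv (fun t => φ (t, 0)) x) * (deriv (fun t => μ t * φ (t, 0)) x) := by
  set R := Icc a b ×ˢ Icc (0 : ℝ) 1
  have d0 : DifferentiableOn ℝ φ R := hφ.differentiableOn (by norm_num)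
  have d1 : DifferentiableOn ℝ (∂ᵧ[R] φ) R :=
    (contDiffOn_partialDerivWithin_Icc_prod hφ hab one_pos _).differentiableOn one_ne_zero
  have hrobin' (x) (hx : x ∈ Ioo a b) : ∂ᵧ[R] φ (x, 0) = μ x * φ (x, 0) := by
    have h := hrobin x hx
    rw [derivWithin_snd_eq_partialDerivWithin d0 one_pos (Ioo_subset_Icc_self hx)
      (left_mem_Icc.2 zero_le_one)] at h
    linarith
  rw [← sub_eq_iff_eq_add', setIntegral_deriv_deriv_mul_sub_setIntegral_sq_eq hab one_pos hφ,
    setIntegral_hessianDet_eq_setIntegral_bottom hab one_pos hφ hlat htop]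
  refine setIntegral_congr_fun measurableSet_Ioo fun x hx => congrArg₂ (· * ·) ?_ ?_
  · exact (d0.hasDerivAt_partialDerivWithin_fst hx (left_mem_Icc.2 zero_le_one)).deriv.symm
  · exact (d1.hasDerivAt_partialDerivWithin_fst hx (left_mem_Icc.2 zero_le_one)).deriv.symm.trans
      (Filter.EventuallyEq.deriv_eq (eventually_of_mem (Ioo_mem_nhds hx.1 hx.2) hrobin'))

/-- Integration-by-parts identity on the rectangle `R_I = (a,b) × (0,1)` for a `C²`
function `φ` vanishing on the lateral and top edges and satisfying the Robin condition
`-∂_η φ(·,0) + μ φ(·,0) = 0` on the bottom edge: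
`∫ ∂_x²φ ∂_η²φ = ∫ |∂_x∂_ηφ|² + ∫_I ∂_xφ(·,0) (μ φ(·,0))' dx`. -/
theorem stmt_5 (a b : ℝ) (hab : a < b) (μ : ℝ → ℝ) (φ : ℝ × ℝ → ℝ)
    (hμ : ContDiffOn ℝ 2 μ (Icc a b))
    (hφ : ContDiffOn ℝ 2 φ (Icc a b ×ˢ Icc (0:ℝ) 1))
    (hlat : ∀ η ∈ Ioo (0:ℝ) 1, φ (a, η) = 0 ∧ φ (b, η) = 0)
    (htop : ∀ x ∈ Ioo a b, φ (x, 1) = 0)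
    (hrobin : ∀ x ∈ Ioo a b,
      -(derivWithin (fun η => φ (x, η)) (Icc (0:ℝ) 1) 0) + μ x * φ (x, 0) = 0) :
    ∫ p in Ioo a b ×ˢ Ioo (0:ℝ) 1,
        (deriv (deriv (fun t => φ (t, p.2))) p.1)
          * (deriv (deriv (fun s => φ (p.1, s))) p.2) =
      (∫ p in Ioo a b ×ˢ Ioo (0:ℝ) 1,
        (deriv (fun t => deriv (fun s => φ (t, s)) p.2) p.1) ^ 2)
      + ∫ x in Ioo a b,
          (deriv (fun t => φ (t, 0)) x) * (deriv (fun t => μ t * φ (t, 0)) x) :=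
  stmt_5_general a b hab μ φ hφ hlat htop hrobin
end

section
/- Let β > 0, c ≥ 0, and g > 0 be constants, and let P ∈ C⁴([0,1]) satisfy β P''''(y) − c P''(y) = g for all y ∈ (0,1) together with the clamped boundary conditions P(0) = P'(0) = P(1) = P'(1) = 0. Then |P(y)| ≤ g/β for all y ∈ [0,1]. -/
/-!
Testing the equation against `P` and integrating by parts twice, the clamped boundary conditions
kill every boundary term and leave the energy identity `β ‖P''‖² + c ‖P'‖² = g ∫ P`. Since
`P(0) = P'(0) = 0`, integrating twice from `0` gives `|P| ≤ A := ∫ |P''|` on `[0,1]`, and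
`A² ≤ ‖P''‖²` by Cauchy–Schwarz. Hence `β A² ≤ g ∫ P ≤ g A`, that is `A ≤ g / β`.
-/

open Set MeasureTheory intervalIntegral

section Calculus

variable {f f' f'' g g' : ℝ → ℝ} {a b : ℝ}

theorem integral_mul_deriv_eq_neg_integral_deriv_mul_of_eq_zero
    (hf : ∀ x ∈ uIcc a b, HasDerivAt f (f' x) x) (hg : ∀ x ∈ uIcc a b, HasDerivAt g (g' x) x)
    (hf' : IntervalIntegrable f' volume a b) (hg' : IntervalIntegrable g' volume a b)
    (ha : f a = 0) (hb : f b = 0) :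
    ∫ x in a..b, f x * g' x = -∫ x in a..b, f' x * g x := by
  rw [integral_mul_deriv_eq_deriv_mul hf hg hf' hg', ha, hb]
  ring

theorem abs_sub_le_integral_abs_deriv (hab : a ≤ b)
    (hf : ∀ x ∈ Icc a b, HasDerivAt f (f' x) x) (hf' : IntervalIntegrable f' volume a b)
    {y : ℝ} (hy : y ∈ Icc a b) :
    |f y - f a| ≤ ∫ x in a..b, |f' x| := by
  have hsub : uIcc a y ⊆ Icc a b := by
    rw [uIcc_of_le hy.1]
    exact Icc_subset_Icc le_rfl hy.2
  rw [← integral_eq_sub_of_hasDerivAt (fun x hx => hf x (hsub hx))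
    (hf'.mono_set (by rwa [uIcc_of_le hab]))]
  calc |∫ x in a..y, f' x| ≤ ∫ x in a..y, |f' x| := abs_integral_le_integral_abs hy.1
    _ ≤ ∫ x in a..b, |f' x| :=
      integral_mono_interval le_rfl hy.1 hy.2 (.of_forall fun _ => abs_nonneg _) hf'.abs

theorem abs_le_mul_integral_abs_deriv_deriv (hab : a ≤ b)
    (hf : ∀ x ∈ Icc a b, HasDerivAt f (f' x) x) (hf' : ∀ x ∈ Icc a b, HasDerivAt f' (f'' x) x)
    (hf'' : IntervalIntegrable f'' volume a b) (ha : f a = 0) (ha' : f' a = 0)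
    {y : ℝ} (hy : y ∈ Icc a b) :
    |f y| ≤ (b - a) * ∫ x in a..b, |f'' x| := by
  have hf'_int : IntervalIntegrable f' volume a b :=
    (HasDerivAt.continuousOn hf').intervalIntegrable_of_Icc hab
  have hf'_le (x : ℝ) (hx : x ∈ Icc a b) : |f' x| ≤ ∫ x in a..b, |f'' x| := by
    simpa [ha'] using abs_sub_le_integral_abs_deriv hab hf' hf'' hx
  calc |f y| ≤ ∫ x in a..b, |f' x| := by
        simpa [ha] using abs_sub_le_integral_abs_deriv hab hf hf'_int hy
    _ ≤ ∫ _ in a..b, ∫ x in a..b, |f'' x| :=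
      integral_mono_on hab hf'_int.abs intervalIntegrable_const hf'_le
    _ = (b - a) * ∫ x in a..b, |f'' x| := by simp

theorem sq_integral_le_mul_integral_sq (hab : a ≤ b) (hf : IntervalIntegrable f volume a b)
    (hf2 : IntervalIntegrable (fun x => f x ^ 2) volume a b) :
    (∫ x in a..b, f x) ^ 2 ≤ (b - a) * ∫ x in a..b, f x ^ 2 := by
  set I := ∫ x in a..b, f x
  set J := ∫ x in a..b, f x ^ 2
  rcases hab.eq_or_lt with rfl | hlt
  · simp [I]
  -- `∫ ((b - a) f - I)² ≥ 0` is the variance of `f` on `[a, b]`, up to the factor `(b - a)³`.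
  have hvar : 0 ≤ ∫ x in a..b, ((b - a) * f x - I) ^ 2 :=
    integral_nonneg hab fun _ _ => sq_nonneg _
  have hexpand : ∫ x in a..b, ((b - a) * f x - I) ^ 2 = (b - a) * ((b - a) * J - I ^ 2) := by
    have hpt (x : ℝ) : ((b - a) * f x - I) ^ 2
        = (b - a) ^ 2 * f x ^ 2 - 2 * (b - a) * I * f x + I ^ 2 := by ring
    simp_rw [hpt]
    rw [integral_add ((hf2.const_mul _).sub (hf.const_mul _)) intervalIntegrable_const,
      integral_sub (hf2.const_mul _) (hf.const_mul _), intervalIntegral.integral_const_mul,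
      intervalIntegral.integral_const_mul, intervalIntegral.integral_const, smul_eq_mul]
    ring
  rw [hexpand] at hvar
  linarith [(mul_nonneg_iff_of_pos_left (sub_pos.2 hlt)).1 hvar]

end Calculus

section ClampedBeam

variable {β c g a b : ℝ} {P P1 P2 P3 P4 : ℝ → ℝ}

theorem clamped_beam_energy (hab : a ≤ b)
    (h1 : ∀ y ∈ Icc a b, HasDerivAt P (P1 y) y)
    (h2 : ∀ y ∈ Icc a b, HasDerivAt P1 (P2 y) y)
    (h3 : ∀ y ∈ Icc a b, HasDerivAt P2 (P3 y) y)
    (h4 : ∀ y ∈ Icc a b, HasDerivAt P3 (P4 y) y)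
    (hP4 : ContinuousOn P4 (Icc a b))
    (hode : ∀ y ∈ Ioo a b, β * P4 y - c * P2 y = g)
    (hPa : P a = 0) (hP1a : P1 a = 0) (hPb : P b = 0) (hP1b : P1 b = 0) :
    β * (∫ x in a..b, P2 x ^ 2) + c * ∫ x in a..b, P1 x ^ 2 = g * ∫ x in a..b, P x := by
  have hI : uIcc a b = Icc a b := uIcc_of_le hab
  rw [← hI] at h1 h2 h3 h4 hP4
  have hcP := HasDerivAt.continuousOn h1
  have hcP2 := HasDerivAt.continuousOn h3
  have hint {u : ℝ → ℝ} (hu : ContinuousOn u (uIcc a b)) : IntervalIntegrable u volume a b :=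
    hu.intervalIntegrable
  have hP1P3 : ∫ x in a..b, P1 x * P3 x = -∫ x in a..b, P2 x ^ 2 := by
    simpa only [sq] using integral_mul_deriv_eq_neg_integral_deriv_mul_of_eq_zero h2 h3
      (hint hcP2) (hint (HasDerivAt.continuousOn h4)) hP1a hP1b
  have hPP4 : ∫ x in a..b, P x * P4 x = ∫ x in a..b, P2 x ^ 2 := by
    rw [integral_mul_deriv_eq_neg_integral_deriv_mul_of_eq_zero h1 h4
      (hint (HasDerivAt.continuousOn h2)) (hint hP4) hPa hPb, hP1P3, neg_neg]
  have hPP2 : ∫ x in a..b, P x * P2 x = -∫ x in a..b, P1 x ^ 2 := by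
    simpa only [sq] using integral_mul_deriv_eq_neg_integral_deriv_mul_of_eq_zero h1 h2
      (hint (HasDerivAt.continuousOn h2)) (hint hcP2) hPa hPb
  have htest : ∫ x in a..b, (β * (P x * P4 x) - c * (P x * P2 x)) = ∫ x in a..b, g * P x :=
    integral_congr_Ioo_of_le hab fun y hy => by
      rw [← hode y hy]
      ring
  rw [integral_sub (f := fun x => β * (P x * P4 x)) (g := fun x => c * (P x * P2 x))
      ((hint (hcP.mul hP4)).const_mul β) ((hint (hcP.mul hcP2)).const_mul c),
    intervalIntegral.integral_const_mul, intervalIntegral.integral_const_mul,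
    intervalIntegral.integral_const_mul, hPP4, hPP2, mul_neg, sub_neg_eq_add] at htest
  exact htest

end ClampedBeam

/-- Uniform bound for the clamped beam equation on `[0,1]`: if
`β P'''' - c P'' = g` on `(0,1)` with `P(0) = P'(0) = P(1) = P'(1) = 0`, then
`|P| ≤ g/β` on `[0,1]`. -/
theorem stmt_12 (β c g : ℝ) (hβ : 0 < β) (hc : 0 ≤ c) (hg : 0 < g)
    (P P1 P2 P3 P4 : ℝ → ℝ)
    (h1 : ∀ y ∈ Icc (0:ℝ) 1, HasDerivAt P (P1 y) y)
    (h2 : ∀ y ∈ Icc (0:ℝ) 1, HasDerivAt P1 (P2 y) y)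
    (h3 : ∀ y ∈ Icc (0:ℝ) 1, HasDerivAt P2 (P3 y) y)
    (h4 : ∀ y ∈ Icc (0:ℝ) 1, HasDerivAt P3 (P4 y) y)
    (hP4 : ContinuousOn P4 (Icc (0:ℝ) 1))
    (hode : ∀ y ∈ Ioo (0:ℝ) 1, β * P4 y - c * P2 y = g)
    (hP0 : P 0 = 0) (hP10 : P1 0 = 0) (hP1 : P 1 = 0) (hP11 : P1 1 = 0) :
    ∀ y ∈ Icc (0:ℝ) 1, |P y| ≤ g / β := by
  have hcP2 := HasDerivAt.continuousOn h3
  set A := ∫ x in (0:ℝ)..1, |P2 x|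
  have hP_le (y : ℝ) (hy : y ∈ Icc (0:ℝ) 1) : |P y| ≤ A := by
    simpa using abs_le_mul_integral_abs_deriv_deriv zero_le_one h1 h2
      (hcP2.intervalIntegrable_of_Icc zero_le_one) hP0 hP10 hy
  have hA_sq : A ^ 2 ≤ ∫ x in (0:ℝ)..1, P2 x ^ 2 := by
    simpa using sq_integral_le_mul_integral_sq zero_le_one
      (hcP2.abs.intervalIntegrable_of_Icc zero_le_one)
      ((hcP2.abs.pow 2).intervalIntegrable_of_Icc zero_le_one)
  have hintP : ∫ x in (0:ℝ)..1, P x ≤ A := by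
    calc ∫ x in (0:ℝ)..1, P x ≤ ∫ _ in (0:ℝ)..1, A :=
          integral_mono_on zero_le_one
            ((HasDerivAt.continuousOn h1).intervalIntegrable_of_Icc zero_le_one)
            intervalIntegrable_const fun x hx => (le_abs_self _).trans (hP_le x hx)
      _ = A := by simp
  have henergy := clamped_beam_energy zero_le_one h1 h2 h3 h4 hP4 hode hP0 hP10 hP1 hP11
  have hP1_sq : 0 ≤ ∫ x in (0:ℝ)..1, P1 x ^ 2 := integral_nonneg zero_le_one fun _ _ => sq_nonneg _
  have hA : 0 ≤ A := integral_nonneg zero_le_one fun _ _ => abs_nonneg _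
  have hβA : β * A ^ 2 ≤ g * A :=
    calc β * A ^ 2 ≤ β * ∫ x in (0:ℝ)..1, P2 x ^ 2 := by gcongr
      _ ≤ g * ∫ x in (0:ℝ)..1, P x := by linarith [mul_nonneg hc hP1_sq]
      _ ≤ g * A := by gcongr
  intro y hy
  refine (hP_le y hy).trans ((le_div_iff₀ hβ).2 ?_)
  nlinarith
end

section
/- Let L > 0, H > 0, K > 0, set D := (-L,L), and let σ : [-L,L] → ℝ be continuous with 0 < σ(x) ≤ σ̄ for all x. Let h : [-L,L] × [-H,∞) × [-H,∞) → ℝ be continuously differentiable with |∂_x h(x,z,w)| + |∂_z h(x,z,w)| ≤ K √((1+w²)/(H+w)) and |∂_w h(x,z,w)| ≤ K/√(H+w) for all (x,z,w) with w > -H, and with |h(x,-H,w)| ≤ K; let 𝔥 : [-L,L] × [-H,∞) → ℝ be continuous with |𝔥(x,w)| ≤ K. Then for every u ∈ C¹([-L,L]) with u ≥ -H on [-L,L] and u(-L) = u(L) = 0: (1/2) ∫_{Ω(u)} (|∂_x h(x,z,u(x)) + ∂_w h(x,z,u(x)) u'(x)|² + |∂_z h(x,z,u(x))|²) d(x,z)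 + (1/2) ∫_D σ(x) (h(x,-H,u(x)) − 𝔥(x,u(x)))² dx ≤ 2(1+σ̄)·(2L)·K² + 2K² ‖u‖²_{L²(D)} + K² ‖u'‖²_{L²(D)}. -/
open MeasureTheory Set

/-- The region between the bottom plate at height `-H` and the graph of `u` over
`D = (-L,L)`. -/
def Omega (L H : ℝ) (u : ℝ → ℝ) : Set (ℝ × ℝ) :=
  {p : ℝ × ℝ | p.1 ∈ Set.Ioo (-L) L ∧ -H < p.2 ∧ p.2 < u p.1}

/-!
Pointwise on `Ω(u)`, the growth bounds give
`(∂ₓh + ∂_w h u')² + (∂_z h)² ≤ 2K²(1 + u² + u'²) / (H + u)`, a function of `x` alone.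
The vertical slice of `Ω(u)` above `x` has length `H + u x`, so Tonelli turns the integral over
`Ω(u)` into `∫_D 2K²(1 + u² + u'²)`. The boundary term is bounded by `σbar (2K)² |D|`
since `|h|, |𝔥| ≤ K`.
-/

theorem isOpen_Omega {L H : ℝ} {u : ℝ → ℝ} (hu : ContinuousOn u (Ioo (-L) L)) :
    IsOpen (Omega L H u) := by
  have hcont : ContinuousOn (fun p : ℝ × ℝ => (p.2, u p.1 - p.2)) (Ioo (-L) L ×ˢ univ) :=
    continuousOn_snd.prodMk
      ((hu.comp continuousOn_fst fun p hp => hp.1).sub continuousOn_snd)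
  convert hcont.isOpen_inter_preimage (isOpen_Ioo.prod isOpen_univ)
    (isOpen_Ioi.prod isOpen_Ioi) (t := Ioi (-H) ×ˢ Ioi 0) using 1
  ext p
  simp [Omega]

theorem lintegral_Omega_le (L H : ℝ) {u : ℝ → ℝ} (hΩ : MeasurableSet (Omega L H u))
    (c : ℝ → ℝ) :
    ∫⁻ p in Omega L H u, ENNReal.ofReal (c p.1 / (H + u p.1))
      ≤ ∫⁻ x in Ioo (-L) L, ENNReal.ofReal (c x) := by
  rw [← lintegral_indicator hΩ, ← lintegral_indicator measurableSet_Ioo,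
    Measure.volume_eq_prod]
  refine (lintegral_prod_le _).trans (lintegral_mono fun x => ?_)
  by_cases hx : -L < x ∧ x < L
  · have hslice : (fun z => (Omega L H u).indicator
          (fun p => ENNReal.ofReal (c p.1 / (H + u p.1))) (x, z))
        = (Ioo (-H) (u x)).indicator fun _ => ENNReal.ofReal (c x / (H + u x)) := by
      ext z
      simp [indicator, Omega, hx]
    rw [hslice, lintegral_indicator_const measurableSet_Ioo, Real.volume_Ioo,
      indicator_of_mem (s := Ioo (-L) L) hx, sub_neg_eq_add, add_comm (u x)]
    rcases le_or_gt (H + u x) 0 with hw | hw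
    · simp [ENNReal.ofReal_of_nonpos hw]
    · rw [← ENNReal.ofReal_mul' hw.le, div_mul_cancel₀ _ hw.ne']
  · simp [indicator, Omega, hx]

theorem setIntegral_Omega_le {L H : ℝ} {u c : ℝ → ℝ} {F : ℝ × ℝ → ℝ}
    (hΩ : MeasurableSet (Omega L H u)) (hc : IntegrableOn c (Ioo (-L) L))
    (hc0 : ∀ x ∈ Ioo (-L) L, 0 ≤ c x)
    (hF : ∀ p ∈ Omega L H u, |F p| ≤ c p.1 / (H + u p.1)) :
    ∫ p in Omega L H u, F p ≤ ∫ x in Ioo (-L) L, c x := by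
  have hcnn : 0 ≤ᵐ[volume.restrict (Ioo (-L) L)] c :=
    ae_restrict_of_forall_mem measurableSet_Ioo hc0
  rw [← ENNReal.ofReal_le_ofReal_iff (integral_nonneg_of_ae hcnn)]
  -- Passing through `‖∫ F‖ₑ ≤ ∫⁻ ‖F‖ₑ` requires no measurability of `F`.
  calc ENNReal.ofReal (∫ p in Omega L H u, F p)
      ≤ ‖∫ p in Omega L H u, F p‖ₑ := Real.ofReal_le_enorm _
    _ ≤ ∫⁻ p in Omega L H u, ‖F p‖ₑ := enorm_integral_le_lintegral_enorm _
    _ ≤ ∫⁻ p in Omega L H u, ENNReal.ofReal (c p.1 / (H + u p.1)) :=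
        setLIntegral_mono' hΩ fun p hp => by
          rw [Real.enorm_eq_ofReal_abs]; exact ENNReal.ofReal_le_ofReal (hF p hp)
    _ ≤ ∫⁻ x in Ioo (-L) L, ENNReal.ofReal (c x) := lintegral_Omega_le L H hΩ c
    _ = ENNReal.ofReal (∫ x in Ioo (-L) L, c x) :=
        (ofReal_integral_eq_lintegral_ofReal hc hcnn).symm

theorem add_mul_sq_add_sq_le {K H w a b e d : ℝ} (hw : 0 < H + w)
    (hae : |a| + |e| ≤ K * √((1 + w ^ 2) / (H + w))) (hb : |b| ≤ K / √(H + w)) :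
    (a + b * d) ^ 2 + e ^ 2 ≤ 2 * K ^ 2 * (1 + w ^ 2 + d ^ 2) / (H + w) := by
  have hae2 : a ^ 2 + e ^ 2 ≤ K ^ 2 * (1 + w ^ 2) / (H + w) := by
    have := pow_le_pow_left₀ (by positivity) hae 2
    rw [mul_pow, Real.sq_sqrt (by positivity), ← mul_div_assoc] at this
    nlinarith [abs_nonneg a, abs_nonneg e, sq_abs a, sq_abs e]
  have hb2 : b ^ 2 ≤ K ^ 2 / (H + w) := by
    have := pow_le_pow_left₀ (abs_nonneg b) hb 2
    rwa [div_pow, Real.sq_sqrt hw.le, sq_abs] at this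
  have hbd2 : b ^ 2 * d ^ 2 ≤ K ^ 2 / (H + w) * d ^ 2 :=
    mul_le_mul_of_nonneg_right hb2 (sq_nonneg d)
  calc (a + b * d) ^ 2 + e ^ 2 ≤ 2 * (a ^ 2 + e ^ 2) + 2 * (b ^ 2 * d ^ 2) := by
        nlinarith [sq_nonneg (a - b * d)]
    _ ≤ 2 * (K ^ 2 * (1 + w ^ 2) / (H + w)) + 2 * (K ^ 2 / (H + w) * d ^ 2) := by
        gcongr
    _ = 2 * K ^ 2 * (1 + w ^ 2 + d ^ 2) / (H + w) := by
        field_simp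

theorem setIntegral_mul_sq_sub_le {α : Type*} [MeasurableSpace α] {μ : Measure α} {s : Set α}
    (hs : μ s < ⊤) {σ f g : α → ℝ} {σbar K : ℝ} (hσ : ∀ x ∈ s, 0 < σ x ∧ σ x ≤ σbar)
    (hf : ∀ x ∈ s, |f x| ≤ K) (hg : ∀ x ∈ s, |g x| ≤ K) :
    ∫ x in s, σ x * (f x - g x) ^ 2 ∂μ ≤ σbar * (2 * K) ^ 2 * μ.real s := by
  refine (le_abs_self _).trans ?_
  rw [← Real.norm_eq_abs]
  refine norm_setIntegral_le_of_norm_le_const hs fun x hx => ?_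
  obtain ⟨hσ0, hσbar⟩ := hσ x hx
  have hfg : (f x - g x) ^ 2 ≤ (2 * K) ^ 2 := by
    rw [← sq_abs]
    exact pow_le_pow_left₀ (abs_nonneg _)
      ((abs_sub _ _).trans (by linarith [hf x hx, hg x hx])) 2
  rw [Real.norm_eq_abs, abs_mul, abs_of_pos hσ0, abs_sq]
  exact mul_le_mul hσbar hfg (sq_nonneg _) (hσ0.le.trans hσbar)

theorem setIntegral_Omega_dirichlet_le {L H K : ℝ} (hL : 0 < L) {h : ℝ → ℝ → ℝ → ℝ}
    (hgrow1 : ∀ x ∈ Icc (-L) L, ∀ z ∈ Ici (-H), ∀ w, -H < w →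
      |derivWithin (fun t => h t z w) (Icc (-L) L) x|
        + |derivWithin (fun s => h x s w) (Ici (-H)) z|
        ≤ K * Real.sqrt ((1 + w ^ 2) / (H + w)))
    (hgrow2 : ∀ x ∈ Icc (-L) L, ∀ z ∈ Ici (-H), ∀ w, -H < w →
      |derivWithin (fun s => h x z s) (Ici (-H)) w| ≤ K / Real.sqrt (H + w))
    {u : ℝ → ℝ} (hu : ContDiffOn ℝ 1 u (Icc (-L) L)) :
    ∫ p in Omega L H u,
        ((derivWithin (fun t => h t p.2 (u p.1)) (Icc (-L) L) p.1
            + derivWithin (fun s => h p.1 p.2 s) (Ici (-H)) (u p.1)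
                * derivWithin u (Icc (-L) L) p.1) ^ 2
          + (derivWithin (fun s => h p.1 s (u p.1)) (Ici (-H)) p.2) ^ 2)
      ≤ 2 * K ^ 2 * (2 * L + (∫ x in Ioo (-L) L, u x ^ 2)
          + ∫ x in Ioo (-L) L, (derivWithin u (Icc (-L) L) x) ^ 2) := by
  have hu2 : IntegrableOn (fun x => u x ^ 2) (Ioo (-L) L) :=
    (hu.continuousOn.pow 2).integrableOn_Icc.mono_set Ioo_subset_Icc_self
  have hu'2 : IntegrableOn (fun x => derivWithin u (Icc (-L) L) x ^ 2) (Ioo (-L) L) :=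
    ((hu.continuousOn_derivWithin (uniqueDiffOn_Icc (by linarith)) le_rfl).pow 2
      ).integrableOn_Icc.mono_set Ioo_subset_Icc_self
  have h1 : IntegrableOn (fun _ => (1 : ℝ)) (Ioo (-L) L) :=
    integrableOn_const measure_Ioo_lt_top.ne
  have hc : IntegrableOn (fun x => 2 * K ^ 2 * (1 + u x ^ 2 + derivWithin u (Icc (-L) L) x ^ 2))
      (Ioo (-L) L) :=
    ((h1.add hu2).add hu'2).const_mul _
  have hΩ : MeasurableSet (Omega L H u) :=
    (isOpen_Omega (hu.continuousOn.mono Ioo_subset_Icc_self)).measurableSet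
  refine (setIntegral_Omega_le hΩ hc (fun x _ => by positivity) fun p hp => ?_).trans_eq ?_
  · obtain ⟨hx, hz, hzu⟩ := hp
    have hw : -H < u p.1 := hz.trans hzu
    rw [abs_of_nonneg (by positivity)]
    exact add_mul_sq_add_sq_le (by linarith)
      (hgrow1 p.1 (Ioo_subset_Icc_self hx) p.2 hz.le (u p.1) hw)
      (hgrow2 p.1 (Ioo_subset_Icc_self hx) p.2 hz.le (u p.1) hw)
  · rw [integral_const_mul, integral_add (f := fun x => 1 + u x ^ 2) (Integrable.add h1 hu2) hu'2,
      integral_add h1 hu2, setIntegral_const, Real.volume_real_Ioo_of_le (by linarith)]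
    ring

theorem stmt_15_general (L H K σbar : ℝ) (hL : 0 < L)
    (σ : ℝ → ℝ)
    (hσ : ∀ x ∈ Icc (-L) L, 0 < σ x ∧ σ x ≤ σbar)
    (h : ℝ → ℝ → ℝ → ℝ) (𝔥 : ℝ → ℝ → ℝ)
    (hgrow1 : ∀ x ∈ Icc (-L) L, ∀ z ∈ Ici (-H), ∀ w, -H < w →
      |derivWithin (fun t => h t z w) (Icc (-L) L) x|
        + |derivWithin (fun s => h x s w) (Ici (-H)) z|
        ≤ K * Real.sqrt ((1 + w ^ 2) / (H + w)))
    (hgrow2 : ∀ x ∈ Icc (-L) L, ∀ z ∈ Ici (-H), ∀ w, -H < w →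
      |derivWithin (fun s => h x z s) (Ici (-H)) w| ≤ K / Real.sqrt (H + w))
    (hbd1 : ∀ x ∈ Icc (-L) L, ∀ w ∈ Ici (-H), |h x (-H) w| ≤ K)
    (hbd2 : ∀ x ∈ Icc (-L) L, ∀ w ∈ Ici (-H), |𝔥 x w| ≤ K)
    (u : ℝ → ℝ) (hu : ContDiffOn ℝ 1 u (Icc (-L) L))
    (huH : ∀ x ∈ Icc (-L) L, -H ≤ u x) :
    (1 / 2) * (∫ p in Omega L H u,
        ((derivWithin (fun t => h t p.2 (u p.1)) (Icc (-L) L) p.1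
            + derivWithin (fun s => h p.1 p.2 s) (Ici (-H)) (u p.1)
                * derivWithin u (Icc (-L) L) p.1) ^ 2
          + (derivWithin (fun s => h p.1 s (u p.1)) (Ici (-H)) p.2) ^ 2))
      + (1 / 2) * (∫ x in Ioo (-L) L, σ x * (h x (-H) (u x) - 𝔥 x (u x)) ^ 2)
    ≤ 2 * (1 + σbar) * (2 * L) * K ^ 2
        + 2 * K ^ 2 * (∫ x in Ioo (-L) L, (u x) ^ 2)
        + K ^ 2 * ∫ x in Ioo (-L) L, (derivWithin u (Icc (-L) L) x) ^ 2 := by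
  have hdirichlet := setIntegral_Omega_dirichlet_le hL hgrow1 hgrow2 hu
  have hboundary : ∫ x in Ioo (-L) L, σ x * (h x (-H) (u x) - 𝔥 x (u x)) ^ 2
      ≤ σbar * (2 * K) ^ 2 * (2 * L) := by
    have hI : ∀ x ∈ Ioo (-L) L, x ∈ Icc (-L) L := fun x hx => Ioo_subset_Icc_self hx
    refine (setIntegral_mul_sq_sub_le measure_Ioo_lt_top (fun x hx => hσ x (hI x hx))
      (fun x hx => hbd1 x (hI x hx) (u x) (huH x (hI x hx)))
      (fun x hx => hbd2 x (hI x hx) (u x) (huH x (hI x hx)))).trans_eq ?_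
    rw [Real.volume_real_Ioo_of_le (by linarith)]
    ring
  have hu2 : 0 ≤ ∫ x in Ioo (-L) L, u x ^ 2 :=
    setIntegral_nonneg measurableSet_Ioo fun _ _ => sq_nonneg _
  linarith [mul_nonneg (sq_nonneg K) hu2, mul_nonneg (sq_nonneg K) hL.le]

/-- Coercivity estimate (key step in Lemma 6.1 of the paper): under the growth
assumptions (2.5) on the boundary data `(h, 𝔥)`, the Dirichlet-type quantity
`(1/2)∫_{Ω(u)} |∇ h_u|² + (1/2)∫_D σ (h_u(·,-H) - 𝔥_u)² dx` is bounded by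
`2(1+σbar)(2L)K² + 2K²‖u‖²_{L²(D)} + K²‖u'‖²_{L²(D)}`. -/
theorem stmt_15 (L H K σbar : ℝ) (hL : 0 < L) (hH : 0 < H) (hK : 0 < K)
    (σ : ℝ → ℝ) (hσc : ContinuousOn σ (Icc (-L) L))
    (hσ : ∀ x ∈ Icc (-L) L, 0 < σ x ∧ σ x ≤ σbar)
    (h : ℝ → ℝ → ℝ → ℝ) (𝔥 : ℝ → ℝ → ℝ)
    (hreg : ContDiffOn ℝ 1 (fun p : ℝ × ℝ × ℝ => h p.1 p.2.1 p.2.2)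
      (Icc (-L) L ×ˢ Ici (-H) ×ˢ Ici (-H)))
    (h𝔥reg : ContinuousOn (fun p : ℝ × ℝ => 𝔥 p.1 p.2) (Icc (-L) L ×ˢ Ici (-H)))
    (hgrow1 : ∀ x ∈ Icc (-L) L, ∀ z ∈ Ici (-H), ∀ w, -H < w →
      |derivWithin (fun t => h t z w) (Icc (-L) L) x|
        + |derivWithin (fun s => h x s w) (Ici (-H)) z|
        ≤ K * Real.sqrt ((1 + w ^ 2) / (H + w)))
    (hgrow2 : ∀ x ∈ Icc (-L) L, ∀ z ∈ Ici (-H), ∀ w, -H < w →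
      |derivWithin (fun s => h x z s) (Ici (-H)) w| ≤ K / Real.sqrt (H + w))
    (hbd1 : ∀ x ∈ Icc (-L) L, ∀ w ∈ Ici (-H), |h x (-H) w| ≤ K)
    (hbd2 : ∀ x ∈ Icc (-L) L, ∀ w ∈ Ici (-H), |𝔥 x w| ≤ K)
    (u : ℝ → ℝ) (hu : ContDiffOn ℝ 1 u (Icc (-L) L))
    (huH : ∀ x ∈ Icc (-L) L, -H ≤ u x) (hua : u (-L) = 0) (hub : u L = 0) :
    (1 / 2) * (∫ p in Omega L H u,
        ((derivWithin (fun t => h t p.2 (u p.1)) (Icc (-L) L) p.1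
            + derivWithin (fun s => h p.1 p.2 s) (Ici (-H)) (u p.1)
                * derivWithin u (Icc (-L) L) p.1) ^ 2
          + (derivWithin (fun s => h p.1 s (u p.1)) (Ici (-H)) p.2) ^ 2))
      + (1 / 2) * (∫ x in Ioo (-L) L, σ x * (h x (-H) (u x) - 𝔥 x (u x)) ^ 2)
    ≤ 2 * (1 + σbar) * (2 * L) * K ^ 2
        + 2 * K ^ 2 * (∫ x in Ioo (-L) L, (u x) ^ 2)
        + K ^ 2 * ∫ x in Ioo (-L) L, (derivWithin u (Icc (-L) L) x) ^ 2 :=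
  stmt_15_general L H K σbar hL σ hσ h 𝔥 hgrow1 hgrow2 hbd1 hbd2 u hu huH
end
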